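/- arXiv:1202.0942 — 12 statements merged into one kernel-verified Lean document; each statement's English description precedes it below -/
import Mathlib

section
/- Let f : [a,b] → ℝ be such that f' is absolutely continuous on [a,b] and f'' ∈ L^∞([a,b]). Then for all x ∈ [a, (a+b)/2], |(1/2)[(f(x)+f(a+b-x))/2 + (f(a)+f(b))/2] - (1/2)(x-(a+b)/2)·(f'(x)-f'(a+b-x))/2 - (1/(b-a))∫_a^b f(t) dt| ≤ [(1/3)·((a+3b)/4 - x)(x-a)²/(b-a)³ + (1/3)·((a+b)/2 - x)³/(b-a)³]·(b-a)²·‖f''‖_∞. -/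
/-!
Split `[a, b]` at `x` and `a + b - x`. On each piece, integrating `C - (t - p)² / 2` against `f''`
by parts twice gives boundary terms in `f, f'` and `-∫ f`, since the second derivative is `-1`.
With `p = (3a + b)/4`, `(a + b)/2`, `(a + 3b)/4` and `C` chosen so that the outer parabolas vanish at
`a`, resp. `b`, the boundary terms add up to `(b - a)` times the quadrature rule, so the error is
`(b - a)⁻¹ ∫ K f''` for this piecewise parabolic kernel `K`. Because `x ≤ (a + b)/2` the outer
parabolas are nonnegative on their pieces, and the middle one, `-(t - (a + b)/2)² / 2`, is
nonpositive, so `|∫ K f''| ≤ M ∫ |K|` is an explicit polynomial in `a, b, x`.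
-/

open MeasureTheory Set intervalIntegral

theorem integral_mul_second_deriv_eq {c d : ℝ} {u u' u'' v v' v'' : ℝ → ℝ}
    (hu : ∀ t ∈ uIcc c d, HasDerivAt u (u' t) t) (hu' : ∀ t ∈ uIcc c d, HasDerivAt u' (u'' t) t)
    (hv : ∀ t ∈ uIcc c d, HasDerivAt v (v' t) t) (hv' : ∀ t ∈ uIcc c d, HasDerivAt v' (v'' t) t)
    (hu'' : IntervalIntegrable u'' volume c d) (hv'' : IntervalIntegrable v'' volume c d) :
    ∫ t in c..d, u t * v'' t
      = u d * v' d - u c * v' c - (u' d * v d - u' c * v c) + ∫ t in c..d, u'' t * v t := by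
  have hu'_int : IntervalIntegrable u' volume c d :=
    ContinuousOn.intervalIntegrable fun t ht => (hu' t ht).continuousAt.continuousWithinAt
  have hv'_int : IntervalIntegrable v' volume c d :=
    ContinuousOn.intervalIntegrable fun t ht => (hv' t ht).continuousAt.continuousWithinAt
  rw [integral_mul_deriv_eq_deriv_mul hu hv' hu'_int hv'',
    integral_mul_deriv_eq_deriv_mul hu' hv hu'' hv'_int]
  ring

theorem abs_integral_mul_le_of_abs_le {c d M : ℝ} {q k g : ℝ → ℝ} (hcd : c ≤ d)
    (hg : ∀ᵐ t, t ∈ Icc c d → |g t| ≤ M) (hqk : ∀ t ∈ Icc c d, |q t| ≤ k t)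
    (hk : IntervalIntegrable k volume c d) :
    |∫ t in c..d, q t * g t| ≤ M * ∫ t in c..d, k t := by
  rw [← intervalIntegral.integral_const_mul, ← Real.norm_eq_abs]
  refine norm_integral_le_of_norm_le hcd ?_ (hk.const_mul M)
  filter_upwards [hg] with t hgt ht
  have ht : t ∈ Icc c d := Ioc_subset_Icc_self ht
  rw [Real.norm_eq_abs, abs_mul, mul_comm M]
  exact mul_le_mul (hqk t ht) (hgt ht) (abs_nonneg _) ((abs_nonneg _).trans (hqk t ht))

namespace CompanionOstrowski

noncomputable def parabola (p C t : ℝ) : ℝ := C - (t - p) ^ 2 / 2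

variable {p C : ℝ}

theorem hasDerivAt_parabola (t : ℝ) : HasDerivAt (parabola p C) (p - t) t :=
  ((((hasDerivAt_id' t).sub_const p).fun_pow 2).div_const 2).const_sub C |>.congr_deriv (by ring)

theorem continuous_parabola : Continuous (parabola p C) := by
  unfold parabola
  fun_prop

theorem integral_parabola (c d : ℝ) :
    ∫ t in c..d, parabola p C t = C * (d - c) - ((d - p) ^ 3 - (c - p) ^ 3) / 6 := by
  have hF (t : ℝ) : HasDerivAt (fun s => C * s - (s - p) ^ 3 / 6) (parabola p C t) t :=
    ((hasDerivAt_id' t).const_mul C).fun_sub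
      ((((hasDerivAt_id' t).sub_const p).fun_pow 3).div_const 6) |>.congr_deriv
      (by simp only [parabola]; ring)
  rw [integral_eq_sub_of_hasDerivAt (fun t _ => hF t)
    (continuous_parabola.intervalIntegrable c d)]
  ring

theorem parabola_nonneg {r t : ℝ} (h : |t - p| ≤ r) : 0 ≤ parabola p (r ^ 2 / 2) t := by
  have := sq_le_sq' (abs_le.1 h).1 (abs_le.1 h).2
  unfold parabola
  linarith

theorem parabola_zero_nonpos (t : ℝ) : parabola p 0 t ≤ 0 := by
  unfold parabola
  nlinarith [sq_nonneg (t - p)]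

theorem abs_integral_parabola_mul_le {c d r M : ℝ} {g : ℝ → ℝ} (hcd : c ≤ d)
    (hc : p - r ≤ c) (hd : d ≤ p + r) (hg : ∀ᵐ t, t ∈ Icc c d → |g t| ≤ M) :
    |∫ t in c..d, parabola p (r ^ 2 / 2) t * g t|
      ≤ M * (r ^ 2 / 2 * (d - c) - ((d - p) ^ 3 - (c - p) ^ 3) / 6) := by
  rw [← integral_parabola]
  refine abs_integral_mul_le_of_abs_le hcd hg (fun t ht => (abs_of_nonneg ?_).le)
    (continuous_parabola.intervalIntegrable c d)
  exact parabola_nonneg (abs_le.2 ⟨by linarith [ht.1], by linarith [ht.2]⟩)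

theorem abs_integral_parabola_zero_mul_le {c d M : ℝ} {g : ℝ → ℝ} (hcd : c ≤ d)
    (hg : ∀ᵐ t, t ∈ Icc c d → |g t| ≤ M) :
    |∫ t in c..d, parabola p 0 t * g t| ≤ M * (((d - p) ^ 3 - (c - p) ^ 3) / 6) := by
  have h := abs_integral_mul_le_of_abs_le hcd hg
    (fun t _ => (abs_of_nonpos (parabola_zero_nonpos (p := p) t)).le)
    (continuous_parabola.neg.intervalIntegrable c d)
  rwa [intervalIntegral.integral_neg, integral_parabola, zero_mul, zero_sub, neg_neg] at h

theorem integral_parabola_mul_second_deriv {c d : ℝ} {f f' f'' : ℝ → ℝ}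
    (hf' : ∀ t ∈ uIcc c d, HasDerivAt f (f' t) t)
    (hf'' : ∀ t ∈ uIcc c d, HasDerivAt f' (f'' t) t)
    (hint : IntervalIntegrable f'' volume c d) :
    ∫ t in c..d, parabola p C t * f'' t
      = parabola p C d * f' d - parabola p C c * f' c - ((p - d) * f d - (p - c) * f c)
        - ∫ t in c..d, f t := by
  have hq' (t : ℝ) : HasDerivAt (fun s => p - s) (-1) t := (hasDerivAt_id t).const_sub p
  rw [integral_mul_second_deriv_eq (fun t _ => hasDerivAt_parabola t) (fun t _ => hq' t) hf' hf''
    intervalIntegrable_const hint]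
  simp only [neg_one_mul, intervalIntegral.integral_neg]
  ring

theorem error_eq_integral_parabolas_mul {a b x : ℝ} {f f' f'' : ℝ → ℝ} (hab : a < b)
    (hf' : ∀ t ∈ Icc a b, HasDerivAt f (f' t) t)
    (hf'' : ∀ t ∈ Icc a b, HasDerivAt f' (f'' t) t)
    (hint : IntervalIntegrable f'' volume a b) (hax : a ≤ x) (hxm : x ≤ (a + b) / 2) :
    (1/2) * ((f x + f (a + b - x)) / 2 + (f a + f b) / 2)
      - (1/2) * (x - (a + b) / 2) * ((f' x - f' (a + b - x)) / 2)
      - (1 / (b - a)) * ∫ t in a..b, f t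
    = ((∫ t in a..x, parabola ((3 * a + b) / 4) (((b - a) / 4) ^ 2 / 2) t * f'' t)
        + (∫ t in x..(a + b - x), parabola ((a + b) / 2) 0 t * f'' t)
        + ∫ t in (a + b - x)..b, parabola ((a + 3 * b) / 4) (((b - a) / 4) ^ 2 / 2) t * f'' t)
      / (b - a) := by
  have hab' : uIcc a b = Icc a b := uIcc_of_le hab.le
  have hsub {c d : ℝ} (hc : a ≤ c) (hcd : c ≤ d) (hd : d ≤ b) : uIcc c d ⊆ Icc a b := by
    rw [uIcc_of_le hcd]
    exact Icc_subset_Icc hc hd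
  have piece {c d : ℝ} (hc : a ≤ c) (hcd : c ≤ d) (hd : d ≤ b) (p C : ℝ) :=
    integral_parabola_mul_second_deriv (p := p) (C := C)
      (fun t ht => hf' t (hsub hc hcd hd ht)) (fun t ht => hf'' t (hsub hc hcd hd ht))
      (hint.mono_set ((hsub hc hcd hd).trans hab'.ge))
  have hf_int {c d : ℝ} (hc : a ≤ c) (hcd : c ≤ d) (hd : d ≤ b) :
      IntervalIntegrable f volume c d :=
    ContinuousOn.intervalIntegrable fun t ht =>
      (hf' t (hsub hc hcd hd ht)).continuousAt.continuousWithinAt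
  have hsplit : ∫ t in a..b, f t
      = (∫ t in a..x, f t) + (∫ t in x..(a + b - x), f t) + ∫ t in (a + b - x)..b, f t := by
    rw [integral_add_adjacent_intervals (hf_int le_rfl hax (by linarith))
        (hf_int hax (by linarith) (by linarith)),
      integral_add_adjacent_intervals (hf_int le_rfl (by linarith) (by linarith))
        (hf_int (by linarith) (by linarith) le_rfl)]
  rw [piece le_rfl hax (by linarith), piece hax (by linarith) (by linarith),
    piece (by linarith) (by linarith) le_rfl, hsplit]
  simp only [parabola]
  field_simp [(sub_pos.2 hab).ne']
  ring

end CompanionOstrowski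

open CompanionOstrowski in
theorem companion_ostrowski_like
    (a b : ℝ) (hab : a < b) (f f' f'' : ℝ → ℝ) (M : ℝ)
    (hf' : ∀ t ∈ Icc a b, HasDerivAt f (f' t) t)
    (hf'' : ∀ t ∈ Icc a b, HasDerivAt f' (f'' t) t)
    (hint : IntervalIntegrable f'' volume a b)
    (hM : ∀ᵐ t ∂volume, t ∈ Icc a b → |f'' t| ≤ M)
    (x : ℝ) (hx : x ∈ Icc a ((a + b) / 2)) :
    |(1/2) * ((f x + f (a + b - x)) / 2 + (f a + f b) / 2)
      - (1/2) * (x - (a + b) / 2) * ((f' x - f' (a + b - x)) / 2)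
      - (1 / (b - a)) * ∫ t in a..b, f t|
    ≤ ((1/3) * (((a + 3*b)/4 - x) * (x - a)^2 / (b - a)^3)
       + (1/3) * (((a + b)/2 - x)^3 / (b - a)^3)) * (b - a)^2 * M := by
  obtain ⟨hax, hxm⟩ := hx
  have hba : 0 < b - a := sub_pos.2 hab
  have hM_on {c d : ℝ} (hc : a ≤ c) (hd : d ≤ b) : ∀ᵐ t, t ∈ Icc c d → |f'' t| ≤ M :=
    hM.mono fun t h ht => h ⟨hc.trans ht.1, ht.2.trans hd⟩
  have B₁ := abs_integral_parabola_mul_le (p := (3 * a + b) / 4) (r := (b - a) / 4)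
    hax (by linarith) (by linarith) (hM_on le_rfl (by linarith))
  have B₂ := abs_integral_parabola_zero_mul_le (p := (a + b) / 2) (d := a + b - x)
    (by linarith) (hM_on hax (by linarith))
  have B₃ := abs_integral_parabola_mul_le (p := (a + 3 * b) / 4) (r := (b - a) / 4)
    (c := a + b - x) (by linarith) (by linarith) (by linarith) (hM_on (by linarith) le_rfl)
  rw [error_eq_integral_parabolas_mul hab hf' hf'' hint hax hxm, abs_div,
    abs_of_pos hba, div_le_iff₀ hba]
  calc _ ≤ _ := abs_add_three _ _ _
    _ ≤ _ := add_le_add (add_le_add B₁ B₂) B₃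
    _ = _ := by field_simp [hba.ne']; ring
end

section
/- Let f : [a,b] → ℝ be such that f' is absolutely continuous on [a,b] and f'' ∈ L^∞([a,b]). Then |(1/2)[f((a+b)/2) + (f(a)+f(b))/2] - (1/(b-a))∫_a^b f(t) dt| ≤ (1/48)(b-a)²·‖f''‖_∞. -/
/-!
The averaged rule is `1 / (b - a)` times the composite trapezoidal rule with two panels of
length `(b - a) / 2`. On a panel `[c, d]`, integrating by parts twice against the Peano kernel
`K t = (t - c) (d - t) / 2`, which vanishes at both ends, turns the trapezoidal error into
`∫ K f''`; since `K ≥ 0` and `∫ K = (d - c)³ / 12`, it is at most `(d - c)³ M / 12`.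
Two panels give `(b - a)³ M / 48`.
-/

open MeasureTheory Set Interval

noncomputable def trapezoidKernel (c d t : ℝ) : ℝ := (t - c) * (d - t) / 2

theorem hasDerivAt_trapezoidKernel (c d t : ℝ) :
    HasDerivAt (trapezoidKernel c d) ((c + d - 2 * t) / 2) t := by
  refine ((((hasDerivAt_id' t).sub_const c).mul
    ((hasDerivAt_id' t).const_sub d)).div_const 2).congr_deriv ?_
  ring

theorem continuous_trapezoidKernel (c d : ℝ) : Continuous (trapezoidKernel c d) := by
  unfold trapezoidKernel
  fun_prop

theorem trapezoidKernel_nonneg {c d t : ℝ} (ht : t ∈ Icc c d) : 0 ≤ trapezoidKernel c d t :=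
  div_nonneg (mul_nonneg (sub_nonneg.2 ht.1) (sub_nonneg.2 ht.2)) zero_le_two

theorem integral_trapezoidKernel (c d : ℝ) :
    ∫ t in c..d, trapezoidKernel c d t = (d - c) ^ 3 / 12 := by
  have hexpand : trapezoidKernel c d = fun t => (c + d) / 2 * t - (1 / 2 * t ^ 2 + c * d / 2) := by
    funext t
    simp only [trapezoidKernel]
    ring
  rw [hexpand, intervalIntegral.integral_sub, intervalIntegral.integral_add,
    intervalIntegral.integral_const_mul, intervalIntegral.integral_const_mul, integral_id,
    integral_pow, intervalIntegral.integral_const]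
  · simp only [smul_eq_mul]
    ring
  all_goals exact Continuous.intervalIntegrable (by fun_prop) c d

theorem trapezoidal_error_one_eq_integral_kernel_mul {f f' f'' : ℝ → ℝ} {c d : ℝ}
    (hf' : ∀ t ∈ [[c, d]], HasDerivAt f (f' t) t)
    (hf'' : ∀ t ∈ [[c, d]], HasDerivAt f' (f'' t) t)
    (hint : IntervalIntegrable f'' volume c d) :
    trapezoidal_error f 1 c d = ∫ t in c..d, trapezoidKernel c d t * f'' t := by
  have hKf'' : IntervalIntegrable (fun t => trapezoidKernel c d t * f'' t) volume c d :=
    hint.continuousOn_mul (continuous_trapezoidKernel c d).continuousOn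
  have hf : IntervalIntegrable f volume c d :=
    ContinuousOn.intervalIntegrable fun t ht => (hf' t ht).continuousAt.continuousWithinAt
  have hG : ∀ t ∈ [[c, d]], HasDerivAt
      (fun t => trapezoidKernel c d t * f' t - (c + d - 2 * t) / 2 * f t)
      (trapezoidKernel c d t * f'' t + f t) t := by
    intro t ht
    have hlin : HasDerivAt (fun t : ℝ => (c + d - 2 * t) / 2) (-1) t := by
      refine ((((hasDerivAt_id' t).const_mul 2).const_sub (c + d)).div_const 2).congr_deriv ?_
      ring
    refine (((hasDerivAt_trapezoidKernel c d t).mul (hf'' t ht)).sub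
      (hlin.mul (hf' t ht))).congr_deriv ?_
    ring
  have hFTC := intervalIntegral.integral_eq_sub_of_hasDerivAt hG (hKf''.add hf)
  rw [intervalIntegral.integral_add hKf'' hf] at hFTC
  rw [trapezoidal_error, trapezoidal_integral_one]
  simp only [trapezoidKernel] at hFTC ⊢
  linarith

theorem abs_trapezoidal_error_one_le {f f' f'' : ℝ → ℝ} {c d M : ℝ} (hcd : c ≤ d)
    (hf' : ∀ t ∈ Icc c d, HasDerivAt f (f' t) t)
    (hf'' : ∀ t ∈ Icc c d, HasDerivAt f' (f'' t) t)
    (hint : IntervalIntegrable f'' volume c d)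
    (hM : ∀ᵐ t ∂volume, t ∈ Icc c d → |f'' t| ≤ M) :
    |trapezoidal_error f 1 c d| ≤ (d - c) ^ 3 * M / 12 := by
  rw [← uIcc_of_le hcd] at hf' hf''
  have hKf'' : IntervalIntegrable (fun t => trapezoidKernel c d t * f'' t) volume c d :=
    hint.continuousOn_mul (continuous_trapezoidKernel c d).continuousOn
  have hpointwise : ∀ᵐ t ∂volume.restrict (Icc c d),
      |trapezoidKernel c d t * f'' t| ≤ trapezoidKernel c d t * M := by
    rw [ae_restrict_iff' measurableSet_Icc]
    filter_upwards [hM] with t htM ht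
    rw [abs_mul, abs_of_nonneg (trapezoidKernel_nonneg ht)]
    exact mul_le_mul_of_nonneg_left (htM ht) (trapezoidKernel_nonneg ht)
  rw [trapezoidal_error_one_eq_integral_kernel_mul hf' hf'' hint]
  calc |∫ t in c..d, trapezoidKernel c d t * f'' t|
      ≤ ∫ t in c..d, |trapezoidKernel c d t * f'' t| :=
        intervalIntegral.abs_integral_le_integral_abs hcd
    _ ≤ ∫ t in c..d, trapezoidKernel c d t * M :=
        intervalIntegral.integral_mono_ae_restrict hcd hKf''.abs
          (((continuous_trapezoidKernel c d).mul continuous_const).intervalIntegrable c d)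
          hpointwise
    _ = (d - c) ^ 3 * M / 12 := by
        rw [intervalIntegral.integral_mul_const, integral_trapezoidKernel]
        ring

theorem averaged_midpoint_trapezoid_eq_trapezoidal_integral_two (f : ℝ → ℝ) {a b : ℝ}
    (hab : a ≠ b) :
    (1/2) * (f ((a + b) / 2) + (f a + f b) / 2) = trapezoidal_integral f 2 a b / (b - a) := by
  have hmid : a + (b - a) / 2 = (a + b) / 2 := by ring
  norm_num [trapezoidal_integral, hmid]
  field_simp [sub_ne_zero.2 hab.symm]
  ring

theorem trapezoidal_error_two_eq_add {f : ℝ → ℝ} {a b : ℝ}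
    (hf : IntervalIntegrable f volume a b) :
    trapezoidal_error f 2 a b =
      trapezoidal_error f 1 a ((a + b) / 2) + trapezoidal_error f 1 ((a + b) / 2) b := by
  have h := sum_trapezoidal_error_adjacent_intervals (N := 2) (h := (b - a) / 2) two_pos
    (by convert hf using 1; push_cast; ring)
  simp only [Finset.sum_range_succ, Finset.sum_range_zero, zero_add] at h
  convert h.symm using 3 <;> push_cast <;> ring

theorem averaged_midpoint_trapezoid
    (a b : ℝ) (hab : a < b) (f f' f'' : ℝ → ℝ) (M : ℝ)
    (hf' : ∀ t ∈ Icc a b, HasDerivAt f (f' t) t)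
    (hf'' : ∀ t ∈ Icc a b, HasDerivAt f' (f'' t) t)
    (hint : IntervalIntegrable f'' volume a b)
    (hM : ∀ᵐ t ∂volume, t ∈ Icc a b → |f'' t| ≤ M) :
    |(1/2) * (f ((a + b) / 2) + (f a + f b) / 2)
      - (1 / (b - a)) * ∫ t in a..b, f t|
    ≤ (1/48) * (b - a)^2 * M := by
  have hba : 0 < b - a := sub_pos.2 hab
  have hf : IntervalIntegrable f volume a b := by
    refine ContinuousOn.intervalIntegrable ?_
    rw [uIcc_of_le hab.le]
    exact fun t ht => (hf' t ht).continuousAt.continuousWithinAt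
  have hpanel : ∀ c d, a ≤ c → c ≤ d → d ≤ b →
      |trapezoidal_error f 1 c d| ≤ (d - c) ^ 3 * M / 12 := by
    intro c d hac hcd hdb
    have hsub : Icc c d ⊆ Icc a b := Icc_subset_Icc hac hdb
    refine abs_trapezoidal_error_one_le hcd (fun t ht => hf' t (hsub ht))
      (fun t ht => hf'' t (hsub ht)) (hint.mono_set ?_) (hM.mono fun t h ht => h (hsub ht))
    rwa [uIcc_of_le hcd, uIcc_of_le hab.le]
  rw [averaged_midpoint_trapezoid_eq_trapezoidal_integral_two f hab.ne, one_div_mul_eq_div,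
    ← sub_div, ← trapezoidal_error, trapezoidal_error_two_eq_add hf, abs_div, abs_of_pos hba,
    div_le_iff₀ hba]
  calc _ ≤ |trapezoidal_error f 1 a ((a + b) / 2)| + |trapezoidal_error f 1 ((a + b) / 2) b| :=
        abs_add_le _ _
    _ ≤ ((a + b) / 2 - a) ^ 3 * M / 12 + (b - (a + b) / 2) ^ 3 * M / 12 :=
        add_le_add (hpanel _ _ le_rfl (by linarith) (by linarith))
          (hpanel _ _ (by linarith) (by linarith) le_rfl)
    _ = 1 / 48 * (b - a) ^ 2 * M * (b - a) := by ring
end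

section
/- The constant 1/48 in the averaged midpoint–trapezoid inequality is sharp: for f(t) = (t-a)², one has equality |(1/2)[f((a+b)/2) + (f(a)+f(b))/2] - (1/(b-a))∫_a^b f(t) dt| = (1/48)(b-a)²·‖f''‖_∞. -/
open MeasureTheory Set

theorem sharpness_one_over_48
    (a b : ℝ) (hab : a < b) (f : ℝ → ℝ) (hf : ∀ t, f t = (t - a)^2) :
    |(1/2) * (f ((a + b) / 2) + (f a + f b) / 2)
      - (1 / (b - a)) * ∫ t in a..b, f t|
    = (1/48) * (b - a)^2 * 2 := by
  have hint : (∫ t in a..b, f t) = (b - a)^3 / 3 := by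
    simp only [hf]
    rw [intervalIntegral.integral_comp_sub_right (fun t => t^2) a,
      integral_pow]
    ring
  rw [hint]
  simp only [hf]
  have h : b - a ≠ 0 := sub_ne_zero.mpr hab.ne'
  rw [abs_of_nonneg]
  · field_simp; ring
  · have : (1/2) * (((a + b)/2 - a)^2 + ((a - a)^2 + (b - a)^2) / 2)
        - (1 / (b - a)) * ((b - a)^3 / 3) = (b - a)^2 / 24 := by
      field_simp; ring
    rw [this]; positivity
end

section
/- Let f : [a,b] → ℝ be such that f' is absolutely continuous on [a,b] and f'' ∈ L^∞([a,b]). Then the perturbed trapezoid inequality holds: |(f(a)+f(b))/2 - ((b-a)/8)(f'(b)-f'(a)) - (1/(b-a))∫_a^b f(t) dt| ≤ ((b-a)²/24)·‖f''‖_∞. -/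
/-!
Two integrations by parts against the Peano kernel `(t - m)² / 2`, with `m` the midpoint, give
`∫ (t - m)² / 2 · f'' = (b - a)² / 8 · (f' b - f' a) - (b - a) (f a + f b) / 2 + ∫ f`,
i.e. `b - a` times the trapezoid error up to sign. Bounding `|f''|` by `M` under the nonnegative
kernel leaves `M ∫ (t - m)² / 2 = M (b - a)³ / 24`.
-/

open MeasureTheory Set

theorem integral_sub_mul_deriv_eq {a b c : ℝ} {f f' : ℝ → ℝ}
    (hf : ∀ t ∈ uIcc a b, HasDerivAt f (f' t) t) (hf' : IntervalIntegrable f' volume a b) :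
    ∫ t in a..b, (t - c) * f' t = (b - c) * f b - (a - c) * f a - ∫ t in a..b, f t := by
  simpa using intervalIntegral.integral_mul_deriv_eq_deriv_mul
    (fun t _ => (hasDerivAt_id t).sub_const c) hf intervalIntegrable_const hf'

theorem integral_sq_sub_div_two_mul_deriv_eq {a b c : ℝ} {f f' : ℝ → ℝ}
    (hf : ∀ t ∈ uIcc a b, HasDerivAt f (f' t) t) (hf' : IntervalIntegrable f' volume a b) :
    ∫ t in a..b, (t - c) ^ 2 / 2 * f' t
      = (b - c) ^ 2 / 2 * f b - (a - c) ^ 2 / 2 * f a - ∫ t in a..b, (t - c) * f t := by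
  have hkernel (t : ℝ) : HasDerivAt (fun t => (t - c) ^ 2 / 2) (t - c) t := by
    simpa using (((hasDerivAt_id t).sub_const c).pow 2).div_const 2
  exact intervalIntegral.integral_mul_deriv_eq_deriv_mul (fun t _ => hkernel t) hf
    ((by fun_prop : Continuous fun t : ℝ => t - c).intervalIntegrable _ _) hf'

theorem integral_midpoint_kernel_mul_deriv2_eq {a b : ℝ} {f f' f'' : ℝ → ℝ}
    (hf : ∀ t ∈ uIcc a b, HasDerivAt f (f' t) t)
    (hf' : ∀ t ∈ uIcc a b, HasDerivAt f' (f'' t) t) (hf'' : IntervalIntegrable f'' volume a b) :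
    ∫ t in a..b, (t - (a + b) / 2) ^ 2 / 2 * f'' t
      = (b - a) ^ 2 / 8 * (f' b - f' a) - (b - a) * ((f a + f b) / 2) + ∫ t in a..b, f t := by
  have hf'_int : IntervalIntegrable f' volume a b :=
    ContinuousOn.intervalIntegrable fun t ht => (hf' t ht).continuousAt.continuousWithinAt
  rw [integral_sq_sub_div_two_mul_deriv_eq hf' hf'', integral_sub_mul_deriv_eq hf hf'_int]
  ring

theorem integral_sq_sub_midpoint (a b : ℝ) :
    ∫ t in a..b, (t - (a + b) / 2) ^ 2 = (b - a) ^ 3 / 12 := by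
  rw [intervalIntegral.integral_comp_sub_right (fun t => t ^ 2), integral_pow]
  ring

theorem abs_integral_midpoint_kernel_mul_le {a b M : ℝ} {g : ℝ → ℝ} (hab : a ≤ b)
    (hg : ∀ᵐ t, t ∈ Icc a b → |g t| ≤ M) :
    |∫ t in a..b, (t - (a + b) / 2) ^ 2 / 2 * g t| ≤ (b - a) ^ 3 / 24 * M := by
  have hpointwise : ∀ᵐ t, t ∈ Ioc a b →
      ‖(t - (a + b) / 2) ^ 2 / 2 * g t‖ ≤ (t - (a + b) / 2) ^ 2 / 2 * M := by
    filter_upwards [hg] with t ht hmem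
    rw [Real.norm_eq_abs, abs_mul, abs_of_nonneg (by positivity)]
    exact mul_le_mul_of_nonneg_left (ht (Ioc_subset_Icc_self hmem)) (by positivity)
  have hbound_int : IntervalIntegrable (fun t => (t - (a + b) / 2) ^ 2 / 2 * M) volume a b :=
    (by fun_prop : Continuous fun t : ℝ => (t - (a + b) / 2) ^ 2 / 2 * M).intervalIntegrable _ _
  calc |∫ t in a..b, (t - (a + b) / 2) ^ 2 / 2 * g t|
      ≤ ∫ t in a..b, (t - (a + b) / 2) ^ 2 / 2 * M :=
        intervalIntegral.norm_integral_le_of_norm_le hab hpointwise hbound_int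
    _ = (b - a) ^ 3 / 24 * M := by
        rw [intervalIntegral.integral_mul_const, intervalIntegral.integral_div,
          integral_sq_sub_midpoint]
        ring

theorem perturbed_trapezoid
    (a b : ℝ) (hab : a < b) (f f' f'' : ℝ → ℝ) (M : ℝ)
    (hf' : ∀ t ∈ Icc a b, HasDerivAt f (f' t) t)
    (hf'' : ∀ t ∈ Icc a b, HasDerivAt f' (f'' t) t)
    (hint : IntervalIntegrable f'' volume a b)
    (hM : ∀ᵐ t ∂volume, t ∈ Icc a b → |f'' t| ≤ M) :
    |(f a + f b) / 2 - ((b - a) / 8) * (f' b - f' a)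
      - (1 / (b - a)) * ∫ t in a..b, f t|
    ≤ ((b - a)^2 / 24) * M := by
  have hI : uIcc a b = Icc a b := uIcc_of_le hab.le
  have hba : 0 < b - a := sub_pos.2 hab
  have herror : (f a + f b) / 2 - ((b - a) / 8) * (f' b - f' a) - (1 / (b - a)) * ∫ t in a..b, f t
      = -(∫ t in a..b, (t - (a + b) / 2) ^ 2 / 2 * f'' t) / (b - a) := by
    rw [integral_midpoint_kernel_mul_deriv2_eq (hI ▸ hf') (hI ▸ hf'') hint]
    field_simp
    ring
  rw [herror, abs_div, abs_neg, abs_of_pos hba, div_le_iff₀ hba]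
  calc _ ≤ (b - a) ^ 3 / 24 * M := abs_integral_midpoint_kernel_mul_le hab.le hM
    _ = (b - a) ^ 2 / 24 * M * (b - a) := by ring
end

section
/- Let f : [a,b] → ℝ be such that f' is absolutely continuous on [a,b] and f'' ∈ L^∞([a,b]). Then |(1/2)[(f((3a+b)/4)+f((a+3b)/4))/2 + (f(a)+f(b))/2] + ((b-a)/8)·(f'((3a+b)/4) - f'((a+3b)/4))/2 - (1/(b-a))∫_a^b f(t) dt| ≤ (1/64)(b-a)²·‖f''‖_∞. -/
/-!
Peano kernel argument. With `p = (3a+b)/4`, `q = (a+3b)/4`, `m = (a+b)/2`, integrate by parts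
twice on `[a, p]`, `[p, q]`, `[q, b]` against the kernels `(t-a)(m-t)/2`, `-(t-m)²/2`,
`(t-m)(b-t)/2`, all with second derivative `-1`. Their values and slopes at the nodes make the
boundary terms add up to `b - a` times the quadrature rule, so `(b - a)` times the error is
`∫ K f''`, which is at most `M ∫ |K|`; each of the three pieces of `∫ |K|` is `(b-a)³/192`.
-/

open MeasureTheory Set

noncomputable def quadKernel (u v t : ℝ) : ℝ := (t - u) * (v - t) / 2

theorem hasDerivAt_quadKernel (u v t : ℝ) :
    HasDerivAt (quadKernel u v) ((u + v) / 2 - t) t :=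
  (((hasDerivAt_id' t).sub_const u).mul ((hasDerivAt_id' t).const_sub v)).div_const 2
    |>.congr_deriv (by ring)

theorem continuous_quadKernel (u v : ℝ) : Continuous (quadKernel u v) := by
  unfold quadKernel; fun_prop

theorem integral_quadKernel (u v c d : ℝ) :
    ∫ t in c..d, quadKernel u v t =
      ((u + v) / 4 * d ^ 2 - d ^ 3 / 6 - u * v / 2 * d)
        - ((u + v) / 4 * c ^ 2 - c ^ 3 / 6 - u * v / 2 * c) := by
  have hF (t : ℝ) : HasDerivAt (fun t => (u + v) / 4 * t ^ 2 - t ^ 3 / 6 - u * v / 2 * t)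
      (quadKernel u v t) t :=
    (((hasDerivAt_pow 2 t).const_mul ((u + v) / 4)).sub ((hasDerivAt_pow 3 t).div_const 6)).sub
      ((hasDerivAt_id' t).const_mul (u * v / 2)) |>.congr_deriv (by unfold quadKernel; ring)
  exact intervalIntegral.integral_eq_sub_of_hasDerivAt (fun t _ => hF t)
    ((continuous_quadKernel u v).intervalIntegrable c d)

theorem quadKernel_nonneg {u v t : ℝ} (hu : u ≤ t) (hv : t ≤ v) : 0 ≤ quadKernel u v t :=
  div_nonneg (mul_nonneg (sub_nonneg.2 hu) (sub_nonneg.2 hv)) zero_le_two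

theorem quadKernel_self_nonpos (m t : ℝ) : quadKernel m m t ≤ 0 := by
  have : quadKernel m m t = -((t - m) ^ 2 / 2) := by unfold quadKernel; ring
  rw [this, neg_nonpos]
  positivity

theorem integral_eq_sub_integral_quadKernel_mul {f f' f'' : ℝ → ℝ} {c d : ℝ} (u v : ℝ)
    (hf' : ∀ t ∈ uIcc c d, HasDerivAt f (f' t) t)
    (hf'' : ∀ t ∈ uIcc c d, HasDerivAt f' (f'' t) t)
    (hint : IntervalIntegrable f'' volume c d) :
    ∫ t in c..d, f t =
      quadKernel u v d * f' d - quadKernel u v c * f' c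
        + ((d - (u + v) / 2) * f d - (c - (u + v) / 2) * f c)
        - ∫ t in c..d, quadKernel u v t * f'' t := by
  have hf'_int : IntervalIntegrable f' volume c d :=
    ContinuousOn.intervalIntegrable fun t ht => (hf'' t ht).continuousAt.continuousWithinAt
  have hkernel' (t : ℝ) : HasDerivAt (fun t => (u + v) / 2 - t) (-1) t :=
    (hasDerivAt_id' t).const_sub _
  rw [intervalIntegral.integral_mul_deriv_eq_deriv_mul
      (fun t _ => hasDerivAt_quadKernel u v t) hf''
      ((continuous_const.sub continuous_id).intervalIntegrable c d) hint,
    intervalIntegral.integral_mul_deriv_eq_deriv_mul (fun t _ => hkernel' t) hf'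
      intervalIntegrable_const hf'_int]
  simp only [neg_one_mul, intervalIntegral.integral_neg]
  ring

theorem abs_integral_mul_le_of_ae_abs_le {g h : ℝ → ℝ} {c d M : ℝ} (hcd : c ≤ d)
    (hg : IntervalIntegrable g volume c d) (hM : ∀ᵐ t, t ∈ Ioc c d → |h t| ≤ M) :
    |∫ t in c..d, g t * h t| ≤ M * ∫ t in c..d, |g t| :=
  calc |∫ t in c..d, g t * h t| ≤ ∫ t in c..d, |g t| * M :=
        intervalIntegral.norm_integral_le_of_norm_le hcd
          (hM.mono fun t ht hts => by
            rw [Real.norm_eq_abs, abs_mul]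
            exact mul_le_mul_of_nonneg_left (ht hts) (abs_nonneg _))
          (hg.abs.mul_const M)
    _ = M * ∫ t in c..d, |g t| := by rw [intervalIntegral.integral_mul_const, mul_comm]

theorem integral_abs_quadKernel_three_quarters {a b : ℝ} (hab : a ≤ b) :
    (∫ t in a..(3 * a + b) / 4, |quadKernel a ((a + b) / 2) t|)
      + (∫ t in (3 * a + b) / 4..(a + 3 * b) / 4, |quadKernel ((a + b) / 2) ((a + b) / 2) t|)
      + (∫ t in (a + 3 * b) / 4..b, |quadKernel ((a + b) / 2) b t|) = (b - a) ^ 3 / 64 := by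
  have hleft : ∫ t in a..(3 * a + b) / 4, |quadKernel a ((a + b) / 2) t|
      = ∫ t in a..(3 * a + b) / 4, quadKernel a ((a + b) / 2) t := by
    refine intervalIntegral.integral_congr fun t ht => abs_of_nonneg (quadKernel_nonneg ?_ ?_)
    all_goals rw [uIcc_of_le (by linarith)] at ht; linarith [ht.1, ht.2]
  have hmid :
      ∫ t in (3 * a + b) / 4..(a + 3 * b) / 4, |quadKernel ((a + b) / 2) ((a + b) / 2) t|
        = -∫ t in (3 * a + b) / 4..(a + 3 * b) / 4, quadKernel ((a + b) / 2) ((a + b) / 2) t := by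
    rw [← intervalIntegral.integral_neg]
    exact intervalIntegral.integral_congr fun t _ => abs_of_nonpos (quadKernel_self_nonpos _ t)
  have hright : ∫ t in (a + 3 * b) / 4..b, |quadKernel ((a + b) / 2) b t|
      = ∫ t in (a + 3 * b) / 4..b, quadKernel ((a + b) / 2) b t := by
    refine intervalIntegral.integral_congr fun t ht => abs_of_nonneg (quadKernel_nonneg ?_ ?_)
    all_goals rw [uIcc_of_le (by linarith)] at ht; linarith [ht.1, ht.2]
  rw [hleft, hmid, hright, integral_quadKernel, integral_quadKernel, integral_quadKernel]
  ring

theorem integral_eq_three_quarters_rule_sub {a b : ℝ} {f f' f'' : ℝ → ℝ} (hab : a ≤ b)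
    (hf' : ∀ t ∈ Icc a b, HasDerivAt f (f' t) t)
    (hf'' : ∀ t ∈ Icc a b, HasDerivAt f' (f'' t) t)
    (hint : IntervalIntegrable f'' volume a b) :
    ∫ t in a..b, f t =
      (b - a) * ((1/2) * ((f ((3*a + b)/4) + f ((a + 3*b)/4)) / 2 + (f a + f b) / 2)
        + ((b - a) / 8) * ((f' ((3*a + b)/4) - f' ((a + 3*b)/4)) / 2))
      - ((∫ t in a..(3 * a + b) / 4, quadKernel a ((a + b) / 2) t * f'' t)
        + (∫ t in (3 * a + b) / 4..(a + 3 * b) / 4,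
            quadKernel ((a + b) / 2) ((a + b) / 2) t * f'' t)
        + ∫ t in (a + 3 * b) / 4..b, quadKernel ((a + b) / 2) b t * f'' t) := by
  have hsub {c d : ℝ} (hc : a ≤ c) (hcd : c ≤ d) (hd : d ≤ b) : uIcc c d ⊆ Icc a b :=
    uIcc_subset_Icc ⟨hc, hcd.trans hd⟩ ⟨hc.trans hcd, hd⟩
  have hpiece {c d : ℝ} (u v : ℝ) (hc : a ≤ c) (hcd : c ≤ d) (hd : d ≤ b) :=
    integral_eq_sub_integral_quadKernel_mul u v (fun t ht => hf' t (hsub hc hcd hd ht))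
      (fun t ht => hf'' t (hsub hc hcd hd ht))
      (hint.mono_set (uIcc_of_le hab ▸ hsub hc hcd hd))
  have hf_int {c d : ℝ} (hc : a ≤ c) (hcd : c ≤ d) (hd : d ≤ b) :
      IntervalIntegrable f volume c d :=
    ContinuousOn.intervalIntegrable fun t ht =>
      (hf' t (hsub hc hcd hd ht)).continuousAt.continuousWithinAt
  have hap : a ≤ (3 * a + b) / 4 := by linarith
  have hpq : (3 * a + b) / 4 ≤ (a + 3 * b) / 4 := by linarith
  have hqb : (a + 3 * b) / 4 ≤ b := by linarith
  rw [← intervalIntegral.integral_add_adjacent_intervals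
      (hf_int le_rfl (hap.trans hpq) hqb) (hf_int (hap.trans hpq) hqb le_rfl),
    ← intervalIntegral.integral_add_adjacent_intervals
      (hf_int le_rfl hap (hpq.trans hqb)) (hf_int hap hpq hqb),
    hpiece a ((a + b) / 2) le_rfl hap (hpq.trans hqb),
    hpiece ((a + b) / 2) ((a + b) / 2) hap hpq hqb,
    hpiece ((a + b) / 2) b (hap.trans hpq) hqb le_rfl]
  simp only [quadKernel]
  ring

theorem best_estimator_three_quarters
    (a b : ℝ) (hab : a < b) (f f' f'' : ℝ → ℝ) (M : ℝ)
    (hf' : ∀ t ∈ Icc a b, HasDerivAt f (f' t) t)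
    (hf'' : ∀ t ∈ Icc a b, HasDerivAt f' (f'' t) t)
    (hint : IntervalIntegrable f'' volume a b)
    (hM : ∀ᵐ t ∂volume, t ∈ Icc a b → |f'' t| ≤ M) :
    |(1/2) * ((f ((3*a + b)/4) + f ((a + 3*b)/4)) / 2 + (f a + f b) / 2)
      + ((b - a) / 8) * ((f' ((3*a + b)/4) - f' ((a + 3*b)/4)) / 2)
      - (1 / (b - a)) * ∫ t in a..b, f t|
    ≤ (1/64) * (b - a)^2 * M := by
  have hba : 0 < b - a := sub_pos.2 hab
  have hbound {c d : ℝ} (u v : ℝ) (hc : a ≤ c) (hcd : c ≤ d) (hd : d ≤ b) :=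
    abs_integral_mul_le_of_ae_abs_le hcd ((continuous_quadKernel u v).intervalIntegrable c d)
      (hM.mono fun t ht hts => ht ⟨hc.trans hts.1.le, hts.2.trans hd⟩)
  have hap : a ≤ (3 * a + b) / 4 := by linarith
  have hpq : (3 * a + b) / 4 ≤ (a + 3 * b) / 4 := by linarith
  have hqb : (a + 3 * b) / 4 ≤ b := by linarith
  have hnormalize (Q E : ℝ) : Q - 1 / (b - a) * ((b - a) * Q - E) = E / (b - a) := by
    field_simp; ring
  rw [integral_eq_three_quarters_rule_sub hab.le hf' hf'' hint, hnormalize, abs_div,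
    abs_of_pos hba, div_le_iff₀ hba]
  calc _ ≤ _ := abs_add_three _ _ _
    _ ≤ _ := add_le_add (add_le_add (hbound _ _ le_rfl hap (hpq.trans hqb))
        (hbound _ _ hap hpq hqb)) (hbound _ _ (hap.trans hpq) hqb le_rfl)
    _ = _ := by
      rw [← mul_add, ← mul_add, integral_abs_quadKernel_three_quarters hab.le]; ring
end

section
/- For a < b and x ∈ [a, (a+b)/2], the function F(x) = ((a+3b)/4 - x)(x-a)² + ((a+b)/2 - x)³ attains its minimum on [a, (a+b)/2] at x = (3a+b)/4, with F((3a+b)/4) = 3(b-a)³/64 and F((3a+b)/4) ≤ F(x) for all x ∈ [a, (a+b)/2]. -/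
open Set

theorem F_min_at_three_quarters
    (a b : ℝ) (hab : a < b)
    (F : ℝ → ℝ)
    (hF : ∀ x, F x = ((a + 3*b)/4 - x) * (x - a)^2 + ((a + b)/2 - x)^3) :
    F ((3*a + b)/4) = 3 * (b - a)^3 / 64 ∧
    ∀ x ∈ Icc a ((a + b)/2), F ((3*a + b)/4) ≤ F x := by
  constructor
  · rw [hF]; ring
  · rintro x ⟨h1, h2⟩
    rw [hF, hF]
    nlinarith [mul_nonneg (sq_nonneg (x - (3*a + b)/4))
      (by linarith : (0:ℝ) ≤ (5*b + 3*a)/8 - x)]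
end

section
/- Let K : [a,b] → ℝ be defined by K(t) = t - a for t ∈ [a,x], K(t) = t - (a+b)/2 for t ∈ (x, a+b-x], and K(t) = t - b for t ∈ (a+b-x, b], where x ∈ [a, (a+b)/2]. Then ∫_a^b |K(t)|·|t - (a+b)/2| dt = (a+3b-4x)(x-a)²/6 + (2/3)((a+b)/2 - x)³. -/
open MeasureTheory Set
open scoped Interval

/-! Split `[a, b]` at the breakpoints `x` and `a + b - x` of `K`. On each piece both factors of
the integrand have constant sign, so it is `±(t - p)(t - q)` for a quadratic with explicit
antiderivative, and the three closed forms add up to the stated value. -/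

theorem integral_sub_mul_sub (c d p q : ℝ) :
    ∫ t in c..d, (t - p) * (t - q)
      = (d ^ 3 - c ^ 3) / 3 - (p + q) * (d ^ 2 - c ^ 2) / 2 + p * q * (d - c) := by
  have antideriv : ∀ t : ℝ, HasDerivAt (fun t : ℝ => t ^ 3 / 3 - (p + q) * t ^ 2 / 2 + p * q * t)
      ((t - p) * (t - q)) t := fun t =>
    ((((hasDerivAt_pow 3 t).div_const 3).sub
      (((hasDerivAt_pow 2 t).const_mul (p + q)).div_const 2)).add
      ((hasDerivAt_id t).const_mul (p * q))).congr_deriv (by push_cast; ring)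
  rw [intervalIntegral.integral_eq_sub_of_hasDerivAt (fun t _ => antideriv t)
    (Continuous.intervalIntegrable (by fun_prop) c d)]
  ring

theorem intervalIntegral.integral_eq_add_add_of_eqOn_uIoc {E : Type*} [NormedAddCommGroup E]
    [NormedSpace ℝ E] {μ : Measure ℝ} {f g₁ g₂ g₃ : ℝ → E} {a x y b : ℝ}
    (h₁ : EqOn f g₁ (Ι a x)) (h₂ : EqOn f g₂ (Ι x y)) (h₃ : EqOn f g₃ (Ι y b))
    (hg₁ : IntervalIntegrable g₁ μ a x) (hg₂ : IntervalIntegrable g₂ μ x y)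
    (hg₃ : IntervalIntegrable g₃ μ y b) :
    ∫ t in a..b, f t ∂μ = (∫ t in a..x, g₁ t ∂μ) + (∫ t in x..y, g₂ t ∂μ) + ∫ t in y..b, g₃ t ∂μ := by
  have hf₁ : IntervalIntegrable f μ a x := (intervalIntegrable_congr h₁).mpr hg₁
  have hf₂ : IntervalIntegrable f μ x y := (intervalIntegrable_congr h₂).mpr hg₂
  have hf₃ : IntervalIntegrable f μ y b := (intervalIntegrable_congr h₃).mpr hg₃
  rw [← integral_add_adjacent_intervals (hf₁.trans hf₂) hf₃,
    ← integral_add_adjacent_intervals hf₁ hf₂,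
    integral_congr_ae (.of_forall h₁),
    integral_congr_ae (.of_forall h₂),
    integral_congr_ae (.of_forall h₃)]

theorem kernel_abs_integral_general
    (a b : ℝ) (x : ℝ) (hx : x ∈ Icc a ((a + b)/2))
    (K : ℝ → ℝ)
    (hK : ∀ t, K t = if t ≤ x then t - a
                     else if t ≤ a + b - x then t - (a + b)/2
                     else t - b) :
    ∫ t in a..b, |K t| * |t - (a + b)/2|
    = (a + 3*b - 4*x) * (x - a)^2 / 6 + (2/3) * ((a + b)/2 - x)^3 := by
  obtain ⟨hax, hxm⟩ := hx
  have hxy : x ≤ a + b - x := by linarith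
  have hyb : a + b - x ≤ b := by linarith
  have left : EqOn (fun t => |K t| * |t - (a + b)/2|)
      (fun t => -((t - a) * (t - (a + b)/2))) (Ι a x) := by
    rw [uIoc_of_le hax]
    rintro t ⟨hat, htx⟩
    dsimp only
    rw [hK t, if_pos htx, abs_of_nonneg (by linarith), abs_of_nonpos (by linarith)]
    ring
  have middle : EqOn (fun t => |K t| * |t - (a + b)/2|)
      (fun t => (t - (a + b)/2) * (t - (a + b)/2)) (Ι x (a + b - x)) := by
    rw [uIoc_of_le hxy]
    rintro t ⟨hxt, hty⟩
    dsimp only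
    rw [hK t, if_neg hxt.not_ge, if_pos hty, abs_mul_abs_self]
  have right : EqOn (fun t => |K t| * |t - (a + b)/2|)
      (fun t => -((t - b) * (t - (a + b)/2))) (Ι (a + b - x) b) := by
    rw [uIoc_of_le hyb]
    rintro t ⟨hyt, htb⟩
    dsimp only
    rw [hK t, if_neg (by linarith), if_neg hyt.not_ge, abs_of_nonpos (by linarith),
      abs_of_nonneg (by linarith)]
    ring
  rw [intervalIntegral.integral_eq_add_add_of_eqOn_uIoc left middle right
      (Continuous.intervalIntegrable (by fun_prop) _ _)
      (Continuous.intervalIntegrable (by fun_prop) _ _)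
      (Continuous.intervalIntegrable (by fun_prop) _ _),
    intervalIntegral.integral_neg, intervalIntegral.integral_neg,
    integral_sub_mul_sub, integral_sub_mul_sub, integral_sub_mul_sub]
  ring

theorem kernel_abs_integral
    (a b : ℝ) (hab : a < b) (x : ℝ) (hx : x ∈ Icc a ((a + b)/2))
    (K : ℝ → ℝ)
    (hK : ∀ t, K t = if t ≤ x then t - a
                     else if t ≤ a + b - x then t - (a + b)/2
                     else t - b) :
    ∫ t in a..b, |K t| * |t - (a + b)/2|
    = (a + 3*b - 4*x) * (x - a)^2 / 6 + (2/3) * ((a + b)/2 - x)^3 :=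
  kernel_abs_integral_general a b x hx K hK
end

section
/- Let g : [a,b] → ℝ be absolutely continuous and x ∈ [a, (a+b)/2]. Let K(t) = t - a on [a,x], K(t) = t - (a+b)/2 on (x, a+b-x], K(t) = t - b on (a+b-x, b]. Then (1/(b-a))∫_a^b K(t) g'(t) dt = (g(x)+g(a+b-x))/2 - (1/(b-a))∫_a^b g(t) dt. -/
/-!
On each of the three pieces `[a, x]`, `[x, a + b - x]`, `[a + b - x, b]` the kernel is
`t ↦ t - c` with `c` the left end, the midpoint, or the right end of `[a, b]`, and integration
by parts gives `∫ (t - c) g' = (q - c) g q - (p - c) g p - ∫ g` on a piece `[p, q]`.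
Summing, the boundary terms at `a` and `b` vanish, and those at `x` and `a + b - x` each
contribute `(b - a) / 2` times the value of `g`.
-/

open MeasureTheory Set intervalIntegral

section

variable {g g' K : ℝ → ℝ} {p q c : ℝ}

theorem integral_sub_const_mul_deriv (hg : ∀ t ∈ uIcc p q, HasDerivAt g (g' t) t)
    (hg' : IntervalIntegrable g' volume p q) (c : ℝ) :
    ∫ t in p..q, (t - c) * g' t = (q - c) * g q - (p - c) * g p - ∫ t in p..q, g t := by
  simpa using integral_mul_deriv_eq_deriv_mul
    (fun t _ => (hasDerivAt_id t).sub_const c) hg intervalIntegrable_const hg'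

theorem IntervalIntegrable.mul_of_eqOn_sub_const (hK : EqOn K (· - c) (uIoc p q))
    (hg' : IntervalIntegrable g' volume p q) :
    IntervalIntegrable (fun t => K t * g' t) volume p q :=
  (hg'.continuousOn_mul (g := fun t => t - c) (by fun_prop)).congr
    fun t ht => by simp only [hK ht]

theorem integral_mul_deriv_of_eqOn_sub_const (hK : EqOn K (· - c) (uIoc p q))
    (hg : ∀ t ∈ uIcc p q, HasDerivAt g (g' t) t) (hg' : IntervalIntegrable g' volume p q) :
    ∫ t in p..q, K t * g' t = (q - c) * g q - (p - c) * g p - ∫ t in p..q, g t := by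
  rw [← integral_sub_const_mul_deriv hg hg' c]
  exact integral_congr_ae (Filter.Eventually.of_forall fun t ht => by rw [hK ht])

end

theorem intervalIntegral.integral_add_adjacent_intervals₃ {f : ℝ → ℝ} {a b c d : ℝ}
    (hab : IntervalIntegrable f volume a b) (hbc : IntervalIntegrable f volume b c)
    (hcd : IntervalIntegrable f volume c d) :
    (∫ t in a..b, f t) + (∫ t in b..c, f t) + ∫ t in c..d, f t = ∫ t in a..d, f t := by
  rw [integral_add_adjacent_intervals hab hbc, integral_add_adjacent_intervals (hab.trans hbc) hcd]

theorem kernel_identity_first_order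
    (a b : ℝ) (hab : a < b) (x : ℝ) (hx : x ∈ Icc a ((a + b)/2))
    (g g' : ℝ → ℝ)
    (hg : ∀ t ∈ Icc a b, HasDerivAt g (g' t) t)
    (hg' : IntervalIntegrable g' volume a b)
    (K : ℝ → ℝ)
    (hK : ∀ t, K t = if t ≤ x then t - a
                     else if t ≤ a + b - x then t - (a + b)/2
                     else t - b) :
    (1 / (b - a)) * ∫ t in a..b, K t * g' t
    = (g x + g (a + b - x)) / 2 - (1 / (b - a)) * ∫ t in a..b, g t := by
  obtain ⟨hax, hxm⟩ := hx
  have hxy : x ≤ a + b - x := by linarith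
  have hyb : a + b - x ≤ b := by linarith
  have piece : ∀ c {p q}, a ≤ p → p ≤ q → q ≤ b → EqOn K (· - c) (uIoc p q) →
      IntervalIntegrable (fun t => K t * g' t) volume p q ∧ IntervalIntegrable g volume p q ∧
        ∫ t in p..q, K t * g' t = (q - c) * g q - (p - c) * g p - ∫ t in p..q, g t := by
    intro c p q hap hpq hqb hKc
    have hsub : uIcc p q ⊆ Icc a b := uIcc_subset_Icc ⟨hap, hpq.trans hqb⟩ ⟨hap.trans hpq, hqb⟩
    have hderiv : ∀ t ∈ uIcc p q, HasDerivAt g (g' t) t := fun t ht => hg t (hsub ht)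
    have hint : IntervalIntegrable g' volume p q := hg'.mono_set (uIcc_of_le hab.le ▸ hsub)
    exact ⟨hint.mul_of_eqOn_sub_const hKc,
      ContinuousOn.intervalIntegrable fun t ht => (hderiv t ht).continuousAt.continuousWithinAt,
      integral_mul_deriv_of_eqOn_sub_const hKc hderiv hint⟩
  obtain ⟨i₁, j₁, e₁⟩ := piece a le_rfl hax (hxy.trans hyb) fun t ht => by
    rw [uIoc_of_le hax] at ht; simp [hK, ht.2]
  obtain ⟨i₂, j₂, e₂⟩ := piece ((a + b) / 2) hax hxy hyb fun t ht => by
    rw [uIoc_of_le hxy] at ht; simp [hK, not_le.2 ht.1, ht.2]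
  obtain ⟨i₃, j₃, e₃⟩ := piece b (hax.trans hxy) hyb le_rfl fun t ht => by
    rw [uIoc_of_le hyb] at ht; simp [hK, not_le.2 (hxy.trans_lt ht.1), not_le.2 ht.1]
  rw [← integral_add_adjacent_intervals₃ i₁ i₂ i₃, ← integral_add_adjacent_intervals₃ j₁ j₂ j₃,
    e₁, e₂, e₃]
  field_simp [sub_ne_zero.2 hab.ne']
  ring
end

section
/- Let f : [a,b] → ℝ have absolutely continuous first derivative, let x ∈ [a, (a+b)/2], and let K be the kernel K(t) = t-a on [a,x], t-(a+b)/2 on (x, a+b-x], t-b on (a+b-x, b]. Then (1/(2(b-a)))∫_a^b K(t)(t - (a+b)/2) f''(t) dt = (1/(b-a))∫_a^b f(t) dt - (1/2)[(f(x)+f(a+b-x))/2 + (f(a)+f(b))/2] + (1/2)(x - (a+b)/2)·(f'(x)-f'(a+b-x))/2. -/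
/-!
On each of the three pieces `[a, x]`, `[x, a + b - x]`, `[a + b - x, b]` the weight
`K t * (t - (a + b) / 2)` is a quadratic polynomial with leading coefficient `1`, so integrating
by parts twice turns its integral against `f''` into boundary terms plus `2 ∫ f`. The quadratic
vanishes at the outer endpoints `a`, `b`, and the boundary terms at `x` and `a + b - x` combine,
by the symmetry `(a + b - x) - (a + b) / 2 = (a + b) / 2 - x`, into the right-hand side.
-/

open MeasureTheory Set Interval intervalIntegral

section IntegrationByPartsTwice

variable {u u' u'' f f' f'' : ℝ → ℝ} {c d : ℝ}

theorem integral_mul_deriv_deriv_eq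
    (hu : ∀ t ∈ [[c, d]], HasDerivAt u (u' t) t)
    (hu' : ∀ t ∈ [[c, d]], HasDerivAt u' (u'' t) t)
    (hu'' : IntervalIntegrable u'' volume c d)
    (hf : ∀ t ∈ [[c, d]], HasDerivAt f (f' t) t)
    (hf' : ∀ t ∈ [[c, d]], HasDerivAt f' (f'' t) t)
    (hf'' : IntervalIntegrable f'' volume c d) :
    ∫ t in c..d, u t * f'' t
      = u d * f' d - u c * f' c - (u' d * f d - u' c * f c) + ∫ t in c..d, u'' t * f t := by
  rw [integral_mul_deriv_eq_deriv_mul hu hf' (HasDerivAt.continuousOn hu').intervalIntegrable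
      hf'', integral_mul_deriv_eq_deriv_mul hu' hf hu''
      (HasDerivAt.continuousOn hf').intervalIntegrable]
  ring

theorem integral_sub_mul_sub_mul_deriv_deriv (α β : ℝ)
    (hf : ∀ t ∈ [[c, d]], HasDerivAt f (f' t) t)
    (hf' : ∀ t ∈ [[c, d]], HasDerivAt f' (f'' t) t)
    (hf'' : IntervalIntegrable f'' volume c d) :
    ∫ t in c..d, (t - α) * (t - β) * f'' t
      = (d - α) * (d - β) * f' d - (c - α) * (c - β) * f' c
        - ((2 * d - α - β) * f d - (2 * c - α - β) * f c) + 2 * ∫ t in c..d, f t := by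
  have hu : ∀ t, HasDerivAt (fun t => (t - α) * (t - β)) (2 * t - α - β) t := fun t =>
    (((hasDerivAt_id' t).sub_const α).mul ((hasDerivAt_id' t).sub_const β)).congr_deriv (by ring)
  have hu' : ∀ t, HasDerivAt (fun t => 2 * t - α - β) 2 t := fun t =>
    ((((hasDerivAt_id' t).const_mul 2).sub_const α).sub_const β).congr_deriv (mul_one 2)
  rw [integral_mul_deriv_deriv_eq (fun t _ => hu t) (fun t _ => hu' t) intervalIntegrable_const
    hf hf' hf'']
  simp only [intervalIntegral.integral_const_mul]

end IntegrationByPartsTwice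

theorem integral_eq_add_add_of_eqOn_Ioc {E : Type*} [NormedAddCommGroup E] [NormedSpace ℝ E]
    {μ : Measure ℝ} {F g₁ g₂ g₃ : ℝ → E} {a x y b : ℝ}
    (hax : a ≤ x) (hxy : x ≤ y) (hyb : y ≤ b)
    (h₁ : EqOn F g₁ (Ioc a x)) (h₂ : EqOn F g₂ (Ioc x y)) (h₃ : EqOn F g₃ (Ioc y b))
    (hg₁ : IntervalIntegrable g₁ μ a x) (hg₂ : IntervalIntegrable g₂ μ x y)
    (hg₃ : IntervalIntegrable g₃ μ y b) :
    ∫ t in a..b, F t ∂μ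
      = (∫ t in a..x, g₁ t ∂μ) + (∫ t in x..y, g₂ t ∂μ) + ∫ t in y..b, g₃ t ∂μ := by
  have congr_piece : ∀ {c d : ℝ} {g : ℝ → E}, c ≤ d → EqOn F g (Ioc c d) →
      IntervalIntegrable g μ c d →
        IntervalIntegrable F μ c d ∧ ∫ t in c..d, F t ∂μ = ∫ t in c..d, g t ∂μ := by
    intro c d g hcd h hg
    rw [← uIoc_of_le hcd] at h
    exact ⟨(intervalIntegrable_congr h).2 hg, integral_congr_ae (ae_of_all _ h)⟩
  obtain ⟨hF₁, e₁⟩ := congr_piece hax h₁ hg₁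
  obtain ⟨hF₂, e₂⟩ := congr_piece hxy h₂ hg₂
  obtain ⟨hF₃, e₃⟩ := congr_piece hyb h₃ hg₃
  rw [← e₁, ← e₂, ← e₃, integral_add_adjacent_intervals hF₁ hF₂,
    integral_add_adjacent_intervals (hF₁.trans hF₂) hF₃]

theorem second_order_kernel_identity
    (a b : ℝ) (hab : a < b) (x : ℝ) (hx : x ∈ Icc a ((a + b)/2))
    (f f' f'' : ℝ → ℝ)
    (hf' : ∀ t ∈ Icc a b, HasDerivAt f (f' t) t)
    (hf'' : ∀ t ∈ Icc a b, HasDerivAt f' (f'' t) t)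
    (hint : IntervalIntegrable f'' volume a b)
    (K : ℝ → ℝ)
    (hK : ∀ t, K t = if t ≤ x then t - a
                     else if t ≤ a + b - x then t - (a + b)/2
                     else t - b) :
    (1 / (2 * (b - a))) * ∫ t in a..b, K t * (t - (a + b)/2) * f'' t
    = (1 / (b - a)) * (∫ t in a..b, f t)
      - (1/2) * ((f x + f (a + b - x)) / 2 + (f a + f b) / 2)
      + (1/2) * (x - (a + b)/2) * ((f' x - f' (a + b - x)) / 2) := by
  obtain ⟨hax, hxm⟩ := hx
  have hxy : x ≤ a + b - x := by linarith
  have hyb : a + b - x ≤ b := by linarith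
  set m := (a + b) / 2
  set y := a + b - x
  rw [← uIcc_of_le hab.le] at hf' hf''
  have hx_mem : x ∈ [[a, b]] := mem_uIcc_of_le hax (hxy.trans hyb)
  have hy_mem : y ∈ [[a, b]] := mem_uIcc_of_le (hax.trans hxy) hyb
  have piece := fun (c d α : ℝ) (hc : c ∈ [[a, b]]) (hd : d ∈ [[a, b]]) =>
    integral_sub_mul_sub_mul_deriv_deriv α m (fun t ht => hf' t (uIcc_subset_uIcc hc hd ht))
      (fun t ht => hf'' t (uIcc_subset_uIcc hc hd ht)) (hint.mono_set (uIcc_subset_uIcc hc hd))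
  have piece_int := fun (c d α : ℝ) (hc : c ∈ [[a, b]]) (hd : d ∈ [[a, b]]) =>
    (hint.mono_set (uIcc_subset_uIcc hc hd)).continuousOn_mul
      (g := fun t => (t - α) * (t - m)) (by fun_prop)
  have hf_int := fun (c d : ℝ) (hc : c ∈ [[a, b]]) (hd : d ∈ [[a, b]]) =>
    ((HasDerivAt.continuousOn hf').mono (uIcc_subset_uIcc hc hd)).intervalIntegrable (μ := volume)
  have hKsplit := integral_eq_add_add_of_eqOn_Ioc (F := fun t => K t * (t - m) * f'' t)
    hax hxy hyb (fun t ht => by simp only [hK, if_pos ht.2])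
    (fun t ht => by simp only [hK, if_neg ht.1.not_ge, if_pos ht.2])
    (fun t ht => by simp only [hK, if_neg (hxy.trans_lt ht.1).not_ge, if_neg ht.1.not_ge])
    (piece_int a x a left_mem_uIcc hx_mem) (piece_int x y m hx_mem hy_mem)
    (piece_int y b b hy_mem right_mem_uIcc)
  have hfsplit := integral_eq_add_add_of_eqOn_Ioc hax hxy hyb (eqOn_refl f _) (eqOn_refl f _)
    (eqOn_refl f _) (hf_int a x left_mem_uIcc hx_mem) (hf_int x y hx_mem hy_mem)
    (hf_int y b hy_mem right_mem_uIcc)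
  rw [hKsplit, hfsplit, piece a x a left_mem_uIcc hx_mem, piece x y m hx_mem hy_mem,
    piece y b b hy_mem right_mem_uIcc]
  have hba : b - a ≠ 0 := sub_ne_zero.2 hab.ne'
  simp only [m, y]
  field_simp
  ring
end

section
/- Let a = x₀ < x₁ < ⋯ < xₙ = b be a partition of [a,b], hᵢ = x_{i+1} - xᵢ, and ξᵢ ∈ [xᵢ, (xᵢ+x_{i+1})/2] for each i. Let f have absolutely continuous derivative with f'' ∈ L^∞([a,b]). Define S(f,Iₙ,ξ) = (1/4)∑ᵢ [f(xᵢ)+f(ξᵢ)+f(xᵢ+x_{i+1}-ξᵢ)+f(x_{i+1})]hᵢ - (1/4)∑ᵢ hᵢ(ξᵢ - (xᵢ+x_{i+1})/2)[f'(ξᵢ) - f'(xᵢ+x_{i+1}-ξᵢ)]. Then |∫_a^b f(x) dx - S(f,Iₙ,ξ)| ≤ (1/3)‖f''‖_∞ ∑ᵢ [((xᵢ+3x_{i+1})/4 - ξᵢ)(xᵢ-ξᵢ)² + ((xᵢ+x_{i+1})/2 - ξᵢ)³]. -/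
open MeasureTheory Set

/-!
On a cell `[u, v]` with midpoint `m` and `ξ ≤ m`, two integrations by parts write the error of the
local rule as `∫ K f''` for the Peano kernel `K` equal to `(t - u)(t - m)/2` on `[u, ξ]`,
`(t - m)²/2` on `[ξ, u + v - ξ]` and `(t - v)(t - m)/2` on `[u + v - ξ, v]`. The kernel has constant
sign on each piece, so when `|f''| ≤ M` the error is at most `M ∫ |K|`, and `∫ |K|` is the cubic
on the right-hand side. Summing over the cells gives the composite estimate.
-/

theorem integral_sub_mul_sub_div_two_mul_eq {p q α β : ℝ} {f f' f'' : ℝ → ℝ}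
    (hf : ∀ t ∈ uIcc p q, HasDerivAt f (f' t) t)
    (hf' : ∀ t ∈ uIcc p q, HasDerivAt f' (f'' t) t)
    (hf'' : IntervalIntegrable f'' volume p q) :
    ∫ t in p..q, (t - α) * (t - β) / 2 * f'' t
      = (q - α) * (q - β) / 2 * f' q - (p - α) * (p - β) / 2 * f' p
        - ((q - (α + β) / 2) * f q - (p - (α + β) / 2) * f p) + ∫ t in p..q, f t := by
  have hK : ∀ t ∈ uIcc p q, HasDerivAt (fun s ↦ (s - α) * (s - β) / 2) (t - (α + β) / 2) t := by
    intro t _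
    exact ((((hasDerivAt_id t).sub_const α).mul ((hasDerivAt_id t).sub_const β)).div_const 2)
      |>.congr_deriv (by simp only [id_eq]; ring)
  have hK' : ∀ t ∈ uIcc p q, HasDerivAt (fun s ↦ s - (α + β) / 2) 1 t :=
    fun t _ ↦ (hasDerivAt_id t).sub_const _
  have hf'_int : IntervalIntegrable f' volume p q :=
    ContinuousOn.intervalIntegrable fun t ht ↦ (hf' t ht).continuousAt.continuousWithinAt
  rw [intervalIntegral.integral_mul_deriv_eq_deriv_mul hK hf'
      ((by fun_prop : Continuous _).intervalIntegrable _ _) hf'',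
    intervalIntegral.integral_mul_deriv_eq_deriv_mul hK' hf intervalIntegrable_const hf'_int]
  simp only [one_mul]
  ring

theorem integral_sub_mul_sub_div_two (p q α β : ℝ) :
    ∫ t in p..q, (t - α) * (t - β) / 2
      = (q ^ 3 / 6 - (α + β) * q ^ 2 / 4 + α * β * q / 2)
        - (p ^ 3 / 6 - (α + β) * p ^ 2 / 4 + α * β * p / 2) := by
  refine intervalIntegral.integral_eq_sub_of_hasDerivAt
    (f := fun s ↦ s ^ 3 / 6 - (α + β) * s ^ 2 / 4 + α * β * s / 2) (fun t _ ↦ ?_)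
    ((by fun_prop : Continuous fun t : ℝ ↦ (t - α) * (t - β) / 2).intervalIntegrable _ _)
  exact (((hasDerivAt_pow 3 t).div_const 6).sub
    (((hasDerivAt_pow 2 t).const_mul (α + β)).div_const 4)).add
    (((hasDerivAt_id t).const_mul (α * β)).div_const 2) |>.congr_deriv (by push_cast; ring)

theorem abs_integral_mul_le_of_nonneg {p q M : ℝ} {k g : ℝ → ℝ} (hpq : p ≤ q)
    (hk : IntervalIntegrable k volume p q) (hk₀ : ∀ t ∈ Icc p q, 0 ≤ k t)
    (hg : ∀ᵐ t, t ∈ Ioc p q → |g t| ≤ M) :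
    |∫ t in p..q, k t * g t| ≤ M * ∫ t in p..q, k t := by
  rw [← intervalIntegral.integral_const_mul M k, ← Real.norm_eq_abs]
  refine intervalIntegral.norm_integral_le_of_norm_le hpq ?_ (hk.const_mul M)
  filter_upwards [hg] with t hgt ht
  rw [Real.norm_eq_abs, abs_mul, abs_of_nonneg (hk₀ t (Ioc_subset_Icc_self ht)), mul_comm M]
  exact mul_le_mul_of_nonneg_left (hgt ht) (hk₀ t (Ioc_subset_Icc_self ht))

theorem abs_integral_mul_le_of_nonpos {p q M : ℝ} {k g : ℝ → ℝ} (hpq : p ≤ q)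
    (hk : IntervalIntegrable k volume p q) (hk₀ : ∀ t ∈ Icc p q, k t ≤ 0)
    (hg : ∀ᵐ t, t ∈ Ioc p q → |g t| ≤ M) :
    |∫ t in p..q, k t * g t| ≤ M * -∫ t in p..q, k t := by
  simpa only [neg_mul, intervalIntegral.integral_neg, abs_neg] using
    abs_integral_mul_le_of_nonneg (k := fun t ↦ -k t) hpq hk.neg
      (fun t ht ↦ neg_nonneg.mpr (hk₀ t ht)) hg

noncomputable def quadRule (f f' : ℝ → ℝ) (u v ξ : ℝ) : ℝ :=
  (1/4) * (f u + f ξ + f (u + v - ξ) + f v) * (v - u)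
    - (1/4) * (v - u) * (ξ - (u + v) / 2) * (f' ξ - f' (u + v - ξ))

section Cell

variable {u v ξ : ℝ} {f f' f'' : ℝ → ℝ}

theorem integral_sub_quadRule_eq (hξ : ξ ∈ Icc u ((u + v) / 2))
    (hf : ∀ t ∈ Icc u v, HasDerivAt f (f' t) t)
    (hf' : ∀ t ∈ Icc u v, HasDerivAt f' (f'' t) t)
    (hf'' : IntervalIntegrable f'' volume u v) :
    (∫ t in u..v, f t) - quadRule f f' u v ξ
      = (∫ t in u..ξ, (t - u) * (t - (u + v) / 2) / 2 * f'' t)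
        + (∫ t in ξ..(u + v - ξ), (t - (u + v) / 2) * (t - (u + v) / 2) / 2 * f'' t)
        + ∫ t in (u + v - ξ)..v, (t - v) * (t - (u + v) / 2) / 2 * f'' t := by
  obtain ⟨hξ₁, hξ₂⟩ := hξ
  have hsub : ∀ {p q}, u ≤ p → p ≤ q → q ≤ v → uIcc p q ⊆ Icc u v := fun hp hpq hq ↦
    (uIcc_of_le hpq).symm ▸ Icc_subset_Icc hp hq
  have h₁ : uIcc u ξ ⊆ Icc u v := hsub le_rfl hξ₁ (by linarith)
  have h₂ : uIcc ξ (u + v - ξ) ⊆ Icc u v := hsub hξ₁ (by linarith) (by linarith)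
  have h₃ : uIcc (u + v - ξ) v ⊆ Icc u v := hsub (by linarith) (by linarith) le_rfl
  have hfi {p q} (h : uIcc p q ⊆ Icc u v) : IntervalIntegrable f volume p q :=
    ContinuousOn.intervalIntegrable fun t ht ↦ (hf t (h ht)).continuousAt.continuousWithinAt
  have parts {p q} (α β) (h : uIcc p q ⊆ Icc u v) :=
    integral_sub_mul_sub_div_two_mul_eq (α := α) (β := β) (fun t ht ↦ hf t (h ht))
      (fun t ht ↦ hf' t (h ht)) (hf''.mono_set (h.trans Icc_subset_uIcc))
  rw [← intervalIntegral.integral_add_adjacent_intervals (hfi h₁) ((hfi h₂).trans (hfi h₃)),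
    ← intervalIntegral.integral_add_adjacent_intervals (hfi h₂) (hfi h₃),
    parts u ((u + v) / 2) h₁, parts ((u + v) / 2) ((u + v) / 2) h₂,
    parts v ((u + v) / 2) h₃, quadRule]
  ring

theorem abs_integral_sub_quadRule_le {M : ℝ} (hξ : ξ ∈ Icc u ((u + v) / 2))
    (hf : ∀ t ∈ Icc u v, HasDerivAt f (f' t) t)
    (hf' : ∀ t ∈ Icc u v, HasDerivAt f' (f'' t) t)
    (hf'' : IntervalIntegrable f'' volume u v) (hM : ∀ᵐ t, t ∈ Icc u v → |f'' t| ≤ M) :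
    |(∫ t in u..v, f t) - quadRule f f' u v ξ|
      ≤ 1 / 3 * M * (((u + 3 * v) / 4 - ξ) * (u - ξ) ^ 2 + ((u + v) / 2 - ξ) ^ 3) := by
  obtain ⟨hξ₁, hξ₂⟩ := hξ
  have hM' {p q} (hp : u ≤ p) (hq : q ≤ v) : ∀ᵐ t, t ∈ Ioc p q → |f'' t| ≤ M :=
    hM.mono fun t h ht ↦ h ⟨hp.trans ht.1.le, ht.2.trans hq⟩
  have kernel (α β p q : ℝ) : IntervalIntegrable (fun t ↦ (t - α) * (t - β) / 2) volume p q :=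
    (by fun_prop : Continuous fun t : ℝ ↦ (t - α) * (t - β) / 2).intervalIntegrable _ _
  have b₁ := abs_integral_mul_le_of_nonpos hξ₁ (kernel u ((u + v) / 2) _ _)
    (fun t ht ↦ by nlinarith [ht.1, ht.2]) (hM' le_rfl (by linarith))
  have b₂ := abs_integral_mul_le_of_nonneg (q := u + v - ξ) (by linarith)
    (kernel ((u + v) / 2) ((u + v) / 2) _ _)
    (fun t _ ↦ div_nonneg (mul_self_nonneg _) zero_le_two) (hM' hξ₁ (by linarith))
  have b₃ := abs_integral_mul_le_of_nonpos (p := u + v - ξ) (by linarith)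
    (kernel v ((u + v) / 2) _ _)
    (fun t ht ↦ by nlinarith [ht.1, ht.2]) (hM' (by linarith) le_rfl)
  rw [integral_sub_mul_sub_div_two] at b₁ b₂ b₃
  rw [integral_sub_quadRule_eq ⟨hξ₁, hξ₂⟩ hf hf' hf'']
  calc _ ≤ _ := abs_add_three _ _ _
    _ ≤ _ := add_le_add_three b₁ b₂ b₃
    _ = _ := by ring

end Cell

theorem composite_quadrature_general
    (a b : ℝ) (n : ℕ) (x : ℕ → ℝ) (ξ : ℕ → ℝ)
    (hx0 : x 0 = a) (hxn : x n = b)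
    (hmono : ∀ i < n, x i < x (i + 1))
    (hξ : ∀ i < n, ξ i ∈ Icc (x i) ((x i + x (i + 1)) / 2))
    (f f' f'' : ℝ → ℝ) (M : ℝ)
    (hf' : ∀ t ∈ Icc a b, HasDerivAt f (f' t) t)
    (hf'' : ∀ t ∈ Icc a b, HasDerivAt f' (f'' t) t)
    (hint : IntervalIntegrable f'' volume a b)
    (hM : ∀ᵐ t ∂volume, t ∈ Icc a b → |f'' t| ≤ M) :
    |(∫ t in a..b, f t)
      - ((1/4) * ∑ i ∈ Finset.range n,
           (f (x i) + f (ξ i) + f (x i + x (i + 1) - ξ i) + f (x (i + 1)))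
             * (x (i + 1) - x i)
         - (1/4) * ∑ i ∈ Finset.range n,
             (x (i + 1) - x i) * (ξ i - (x i + x (i + 1)) / 2)
               * (f' (ξ i) - f' (x i + x (i + 1) - ξ i)))|
    ≤ (1/3) * M * ∑ i ∈ Finset.range n,
        (((x i + 3 * x (i + 1)) / 4 - ξ i) * (x i - ξ i)^2
          + ((x i + x (i + 1)) / 2 - ξ i)^3) := by
  have hx : MonotoneOn x (Iic n) := monotoneOn_of_le_succ ordConnected_Iic
    fun i _ _ hi ↦ (hmono i (Order.succ_le_iff.mp hi)).le
  have hcell : ∀ i < n, Icc (x i) (x (i + 1)) ⊆ Icc a b := fun i hi ↦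
    hx0 ▸ hxn ▸ Icc_subset_Icc (hx (Nat.zero_le n) hi.le (Nat.zero_le i)) (hx hi (le_refl n) hi)
  have hcell_uIcc : ∀ i < n, uIcc (x i) (x (i + 1)) ⊆ uIcc a b := fun i hi ↦
    (uIcc_of_le (hmono i hi).le).symm ▸ (hcell i hi).trans Icc_subset_uIcc
  have hsplit : ∫ t in a..b, f t = ∑ i ∈ Finset.range n, ∫ t in x i..x (i + 1), f t := by
    rw [intervalIntegral.sum_integral_adjacent_intervals, hx0, hxn]
    exact fun i hi ↦ ContinuousOn.intervalIntegrable fun t ht ↦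
      (hf' t (hcell i hi (uIcc_of_le (hmono i hi).le ▸ ht))).continuousAt.continuousWithinAt
  have hrule : ((1/4) * ∑ i ∈ Finset.range n,
           (f (x i) + f (ξ i) + f (x i + x (i + 1) - ξ i) + f (x (i + 1)))
             * (x (i + 1) - x i)
         - (1/4) * ∑ i ∈ Finset.range n,
             (x (i + 1) - x i) * (ξ i - (x i + x (i + 1)) / 2)
               * (f' (ξ i) - f' (x i + x (i + 1) - ξ i)))
      = ∑ i ∈ Finset.range n, quadRule f f' (x i) (x (i + 1)) (ξ i) := by
    simp only [quadRule, Finset.mul_sum, ← Finset.sum_sub_distrib, mul_assoc]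
  rw [hsplit, hrule, ← Finset.sum_sub_distrib, Finset.mul_sum]
  refine (Finset.abs_sum_le_sum_abs _ _).trans (Finset.sum_le_sum fun i hi ↦ ?_)
  rw [Finset.mem_range] at hi
  exact abs_integral_sub_quadRule_le (hξ i hi) (fun t ht ↦ hf' t (hcell i hi ht))
    (fun t ht ↦ hf'' t (hcell i hi ht)) (hint.mono_set (hcell_uIcc i hi))
    (hM.mono fun t h ht ↦ h (hcell i hi ht))

theorem composite_quadrature
    (a b : ℝ) (hab : a < b) (n : ℕ) (x : ℕ → ℝ) (ξ : ℕ → ℝ)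
    (hx0 : x 0 = a) (hxn : x n = b)
    (hmono : ∀ i < n, x i < x (i + 1))
    (hξ : ∀ i < n, ξ i ∈ Icc (x i) ((x i + x (i + 1)) / 2))
    (f f' f'' : ℝ → ℝ) (M : ℝ)
    (hf' : ∀ t ∈ Icc a b, HasDerivAt f (f' t) t)
    (hf'' : ∀ t ∈ Icc a b, HasDerivAt f' (f'' t) t)
    (hint : IntervalIntegrable f'' volume a b)
    (hM : ∀ᵐ t ∂volume, t ∈ Icc a b → |f'' t| ≤ M) :
    |(∫ t in a..b, f t)
      - ((1/4) * ∑ i ∈ Finset.range n,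
           (f (x i) + f (ξ i) + f (x i + x (i + 1) - ξ i) + f (x (i + 1)))
             * (x (i + 1) - x i)
         - (1/4) * ∑ i ∈ Finset.range n,
             (x (i + 1) - x i) * (ξ i - (x i + x (i + 1)) / 2)
               * (f' (ξ i) - f' (x i + x (i + 1) - ξ i)))|
    ≤ (1/3) * M * ∑ i ∈ Finset.range n,
        (((x i + 3 * x (i + 1)) / 4 - ξ i) * (x i - ξ i)^2
          + ((x i + x (i + 1)) / 2 - ξ i)^3) :=
  composite_quadrature_general a b n x ξ hx0 hxn hmono hξ f f' f'' M hf' hf'' hint hM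
end

section
/- Let a = x₀ < x₁ < ⋯ < xₙ = b be a partition of [a,b] with hᵢ = x_{i+1} - xᵢ, and let f have absolutely continuous derivative with f'' ∈ L^∞([a,b]). Define S̄(f,Iₙ) = (1/4)∑ᵢ [f(xᵢ)+f((3xᵢ+x_{i+1})/4)+f((xᵢ+3x_{i+1})/4)+f(x_{i+1})]hᵢ + (1/16)∑ᵢ [f'((3xᵢ+x_{i+1})/4) - f'((xᵢ+3x_{i+1})/4)]hᵢ². Then |∫_a^b f(x) dx - S̄(f,Iₙ)| ≤ (1/64)‖f''‖_∞ ∑ᵢ hᵢ³. -/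
/-!
On a panel `[c, d]` of length `h` with quarter points `p < q`, integrating by parts twice
against the Peano kernel `K` equal to `(t - p)² / 2 - h² / 32` on `[c, p]`, `(t - (c + d) / 2)² / 2`
on `[p, q]` and `(t - q)² / 2 - h² / 32` on `[q, d]` turns the panel error into `∫ K f''`: the
jumps of `K` at `p` and `q` produce the `f'` correction terms. Each piece of `K` has constant sign
and `∫ |K| = h³ / 192` on each of the three pieces, so the panel error is at most `‖f''‖∞ h³ / 64`.
Summing over the panels gives the composite bound.
-/

open MeasureTheory Set intervalIntegral

theorem hasDerivAt_half_sq_sub_add (α β t : ℝ) :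
    HasDerivAt (fun t => (t - α) ^ 2 / 2 + β) (t - α) t :=
  ((((hasDerivAt_id' t).sub_const α).pow 2).div_const 2 |>.add_const β).congr_deriv (by ring)

theorem integral_half_sq_sub_add (u v α β : ℝ) :
    ∫ t in u..v, ((t - α) ^ 2 / 2 + β) = ((v - α) ^ 3 - (u - α) ^ 3) / 6 + β * (v - u) := by
  have hF (t : ℝ) : HasDerivAt (fun t => (t - α) ^ 3 / 6 + β * t) ((t - α) ^ 2 / 2 + β) t :=
    ((((hasDerivAt_id' t).sub_const α).pow 3).div_const 6 |>.add
      ((hasDerivAt_id' t).const_mul β)).congr_deriv (by ring)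
  rw [integral_eq_sub_of_hasDerivAt (fun t _ => hF t)
    ((by fun_prop : Continuous fun t : ℝ => (t - α) ^ 2 / 2 + β).intervalIntegrable _ _)]
  ring

variable {f f' f'' : ℝ → ℝ} {u v : ℝ}

theorem integral_half_sq_sub_add_mul_eq (α β : ℝ)
    (hf' : ∀ t ∈ uIcc u v, HasDerivAt f (f' t) t)
    (hf'' : ∀ t ∈ uIcc u v, HasDerivAt f' (f'' t) t)
    (hint : IntervalIntegrable f'' volume u v) :
    ∫ t in u..v, ((t - α) ^ 2 / 2 + β) * f'' t
      = ((v - α) ^ 2 / 2 + β) * f' v - (v - α) * f v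
        - (((u - α) ^ 2 / 2 + β) * f' u - (u - α) * f u) + ∫ t in u..v, f t := by
  have hfi : IntervalIntegrable f volume u v :=
    ContinuousOn.intervalIntegrable fun t ht => (hf' t ht).continuousAt.continuousWithinAt
  have hKi : IntervalIntegrable (fun t => ((t - α) ^ 2 / 2 + β) * f'' t) volume u v :=
    hint.continuousOn_mul (by fun_prop)
  have hG : ∀ t ∈ uIcc u v, HasDerivAt (fun t => ((t - α) ^ 2 / 2 + β) * f' t - (t - α) * f t)
      (((t - α) ^ 2 / 2 + β) * f'' t - f t) t := fun t ht =>
    ((hasDerivAt_half_sq_sub_add α β t).mul (hf'' t ht)).sub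
      (((hasDerivAt_id' t).sub_const α).mul (hf' t ht)) |>.congr_deriv (by ring)
  rw [eq_add_of_sub_eq (integral_sub hKi hfi).symm, integral_eq_sub_of_hasDerivAt hG (hKi.sub hfi)]

theorem abs_integral_mul_le_mul_integral_abs {K g : ℝ → ℝ} {M : ℝ} (huv : u ≤ v)
    (hK : ContinuousOn K (uIcc u v)) (hM : ∀ᵐ t, t ∈ Icc u v → |g t| ≤ M) :
    |∫ t in u..v, K t * g t| ≤ M * ∫ t in u..v, |K t| := by
  rw [← Real.norm_eq_abs, ← intervalIntegral.integral_const_mul]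
  refine norm_integral_le_of_norm_le huv ?_ (hK.abs.intervalIntegrable.const_mul M)
  filter_upwards [hM] with t ht hmem
  rw [Real.norm_eq_abs, abs_mul, mul_comm M]
  exact mul_le_mul_of_nonneg_left (ht (Ioc_subset_Icc_self hmem)) (abs_nonneg _)

noncomputable def quarterPointRule (f f' : ℝ → ℝ) (c d : ℝ) : ℝ :=
  (1/4) * (f c + f ((3 * c + d) / 4) + f ((c + 3 * d) / 4) + f d) * (d - c)
    + (1/16) * (f' ((3 * c + d) / 4) - f' ((c + 3 * d) / 4)) * (d - c) ^ 2

variable {c d : ℝ}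

theorem integral_sub_quarterPointRule_eq (hcd : c ≤ d)
    (hf' : ∀ t ∈ Icc c d, HasDerivAt f (f' t) t)
    (hf'' : ∀ t ∈ Icc c d, HasDerivAt f' (f'' t) t)
    (hint : IntervalIntegrable f'' volume c d) :
    (∫ t in c..d, f t) - quarterPointRule f f' c d
      = (∫ t in c..(3 * c + d) / 4, ((t - (3 * c + d) / 4) ^ 2 / 2 - (d - c) ^ 2 / 32) * f'' t)
        + (∫ t in (3 * c + d) / 4..(c + 3 * d) / 4, (t - (c + d) / 2) ^ 2 / 2 * f'' t)
        + ∫ t in (c + 3 * d) / 4..d,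
            ((t - (c + 3 * d) / 4) ^ 2 / 2 - (d - c) ^ 2 / 32) * f'' t := by
  set p := (3 * c + d) / 4 with hp_def
  set q := (c + 3 * d) / 4 with hq_def
  have hp : p ∈ Icc c d := ⟨by linarith, by linarith⟩
  have hq : q ∈ Icc c d := ⟨by linarith, by linarith⟩
  have hc : c ∈ Icc c d := left_mem_Icc.2 hcd
  have hd : d ∈ Icc c d := right_mem_Icc.2 hcd
  have piece {u v : ℝ} (hu : u ∈ Icc c d) (hv : v ∈ Icc c d) (α β : ℝ) :=
    have hsub := uIcc_subset_Icc hu hv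
    integral_half_sq_sub_add_mul_eq α β (fun t ht => hf' t (hsub ht))
      (fun t ht => hf'' t (hsub ht)) (hint.mono_set (by rwa [uIcc_of_le hcd]))
  have hfi {u v : ℝ} (hu : u ∈ Icc c d) (hv : v ∈ Icc c d) : IntervalIntegrable f volume u v :=
    ContinuousOn.intervalIntegrable fun t ht =>
      (hf' t (uIcc_subset_Icc hu hv ht)).continuousAt.continuousWithinAt
  have i1 := piece hc hp p (-((d - c) ^ 2 / 32))
  have i2 := piece hp hq ((c + d) / 2) 0
  have i3 := piece hq hd q (-((d - c) ^ 2 / 32))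
  simp only [← sub_eq_add_neg, add_zero] at i1 i2 i3
  rw [i1, i2, i3, ← integral_add_adjacent_intervals (hfi hc hp) (hfi hp hd),
    ← integral_add_adjacent_intervals (hfi hp hq) (hfi hq hd), quarterPointRule]
  ring

theorem integral_abs_half_sq_sub_of_le {u v α γ : ℝ} (huv : u ≤ v)
    (hγ : ∀ t ∈ Icc u v, (t - α) ^ 2 / 2 ≤ γ) :
    ∫ t in u..v, |(t - α) ^ 2 / 2 - γ| = γ * (v - u) - ((v - α) ^ 3 - (u - α) ^ 3) / 6 := by
  have habs : EqOn (fun t => |(t - α) ^ 2 / 2 - γ|) (fun t => -((t - α) ^ 2 / 2 + -γ)) (uIcc u v) :=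
    fun t ht => by
      rw [uIcc_of_le huv] at ht
      simp only [abs_of_nonpos (sub_nonpos.2 (hγ t ht))]
      ring
  rw [integral_congr habs, intervalIntegral.integral_neg, integral_half_sq_sub_add]
  ring

theorem abs_integral_sub_quarterPointRule_le {M : ℝ} (hcd : c ≤ d)
    (hf' : ∀ t ∈ Icc c d, HasDerivAt f (f' t) t)
    (hf'' : ∀ t ∈ Icc c d, HasDerivAt f' (f'' t) t)
    (hint : IntervalIntegrable f'' volume c d)
    (hM : ∀ᵐ t, t ∈ Icc c d → |f'' t| ≤ M) :
    |(∫ t in c..d, f t) - quarterPointRule f f' c d| ≤ (1/64) * M * (d - c) ^ 3 := by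
  rw [integral_sub_quarterPointRule_eq hcd hf' hf'' hint]
  set p := (3 * c + d) / 4 with hp_def
  set q := (c + 3 * d) / 4 with hq_def
  have hcp : c ≤ p := by linarith
  have hpq : p ≤ q := by linarith
  have hqd : q ≤ d := by linarith
  have bound {u v : ℝ} (huv : u ≤ v) (hu : c ≤ u) (hv : v ≤ d) (K : ℝ → ℝ) (hK : Continuous K)
      (hKint : ∫ t in u..v, |K t| = (d - c) ^ 3 / 192) :
      |∫ t in u..v, K t * f'' t| ≤ M * ((d - c) ^ 3 / 192) := by
    rw [← hKint]
    refine abs_integral_mul_le_mul_integral_abs huv hK.continuousOn ?_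
    filter_upwards [hM] with t ht hmem using ht ⟨hu.trans hmem.1, hmem.2.trans hv⟩
  have b1 := bound hcp le_rfl (by linarith) (fun t => (t - p) ^ 2 / 2 - (d - c) ^ 2 / 32)
    (by fun_prop) (by
      rw [integral_abs_half_sq_sub_of_le hcp fun t ht => by nlinarith [ht.1, ht.2]]
      ring)
  have b2 := bound hpq hcp hqd (fun t => (t - (c + d) / 2) ^ 2 / 2) (by fun_prop) (by
      rw [integral_congr (g := fun t => (t - (c + d) / 2) ^ 2 / 2 + 0)
          fun t _ => (abs_of_nonneg (by positivity)).trans (add_zero _).symm,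
        integral_half_sq_sub_add]
      ring)
  have b3 := bound hqd (by linarith) le_rfl (fun t => (t - q) ^ 2 / 2 - (d - c) ^ 2 / 32)
    (by fun_prop) (by
      rw [integral_abs_half_sq_sub_of_le hqd fun t ht => by nlinarith [ht.1, ht.2]]
      ring)
  calc _ ≤ _ := abs_add_three _ _ _
    _ ≤ _ := add_le_add_three b1 b2 b3
    _ = _ := by ring

theorem composite_quadrature_best_general
    (a b : ℝ) (n : ℕ) (x : ℕ → ℝ)
    (hx0 : x 0 = a) (hxn : x n = b)
    (hmono : ∀ i < n, x i < x (i + 1))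
    (f f' f'' : ℝ → ℝ) (M : ℝ)
    (hf' : ∀ t ∈ Icc a b, HasDerivAt f (f' t) t)
    (hf'' : ∀ t ∈ Icc a b, HasDerivAt f' (f'' t) t)
    (hint : IntervalIntegrable f'' volume a b)
    (hM : ∀ᵐ t ∂volume, t ∈ Icc a b → |f'' t| ≤ M) :
    |(∫ t in a..b, f t)
      - ((1/4) * ∑ i ∈ Finset.range n,
           (f (x i) + f ((3 * x i + x (i + 1)) / 4)
             + f ((x i + 3 * x (i + 1)) / 4) + f (x (i + 1)))
             * (x (i + 1) - x i)
         + (1/16) * ∑ i ∈ Finset.range n,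
             (f' ((3 * x i + x (i + 1)) / 4) - f' ((x i + 3 * x (i + 1)) / 4))
               * (x (i + 1) - x i)^2)|
    ≤ (1/64) * M * ∑ i ∈ Finset.range n, (x (i + 1) - x i)^3 := by
  have hx : MonotoneOn x (Iic n) :=
    monotoneOn_of_le_succ ordConnected_Iic fun i _ _ hi => (hmono i hi).le
  have hpanel : ∀ i < n, Icc (x i) (x (i + 1)) ⊆ Icc a b := fun i hi =>
    hx0 ▸ hxn ▸ Icc_subset_Icc (hx (Nat.zero_le n) hi.le (Nat.zero_le i))
      (hx hi (mem_Iic.2 le_rfl) hi)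
  have hpanel_uIcc : ∀ i < n, uIcc (x i) (x (i + 1)) ⊆ uIcc a b := fun i hi =>
    uIcc_of_le (hmono i hi).le ▸ (hpanel i hi).trans Icc_subset_uIcc
  have hsplit : ∫ t in a..b, f t = ∑ i ∈ Finset.range n, ∫ t in x i..x (i + 1), f t := by
    rw [sum_integral_adjacent_intervals, hx0, hxn]
    exact fun i hi => ContinuousOn.intervalIntegrable fun t ht =>
      (hf' t (hpanel i hi (uIcc_of_le (hmono i hi).le ▸ ht))).continuousAt.continuousWithinAt
  rw [hsplit, Finset.mul_sum, Finset.mul_sum, ← Finset.sum_add_distrib, ← Finset.sum_sub_distrib,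
    Finset.mul_sum]
  refine (Finset.abs_sum_le_sum_abs _ _).trans (Finset.sum_le_sum fun i hi => ?_)
  rw [Finset.mem_range] at hi
  simpa only [quarterPointRule, mul_assoc] using
    abs_integral_sub_quarterPointRule_le (hmono i hi).le
      (fun t ht => hf' t (hpanel i hi ht)) (fun t ht => hf'' t (hpanel i hi ht))
      (hint.mono_set (hpanel_uIcc i hi))
      (by filter_upwards [hM] with t ht hmem using ht (hpanel i hi hmem))

theorem composite_quadrature_best
    (a b : ℝ) (hab : a < b) (n : ℕ) (x : ℕ → ℝ)
    (hx0 : x 0 = a) (hxn : x n = b)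
    (hmono : ∀ i < n, x i < x (i + 1))
    (f f' f'' : ℝ → ℝ) (M : ℝ)
    (hf' : ∀ t ∈ Icc a b, HasDerivAt f (f' t) t)
    (hf'' : ∀ t ∈ Icc a b, HasDerivAt f' (f'' t) t)
    (hint : IntervalIntegrable f'' volume a b)
    (hM : ∀ᵐ t ∂volume, t ∈ Icc a b → |f'' t| ≤ M) :
    |(∫ t in a..b, f t)
      - ((1/4) * ∑ i ∈ Finset.range n,
           (f (x i) + f ((3 * x i + x (i + 1)) / 4)
             + f ((x i + 3 * x (i + 1)) / 4) + f (x (i + 1)))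
             * (x (i + 1) - x i)
         + (1/16) * ∑ i ∈ Finset.range n,
             (f' ((3 * x i + x (i + 1)) / 4) - f' ((x i + 3 * x (i + 1)) / 4))
               * (x (i + 1) - x i)^2)|
    ≤ (1/64) * M * ∑ i ∈ Finset.range n, (x (i + 1) - x i)^3 :=
  composite_quadrature_best_general a b n x hx0 hxn hmono f f' f'' M hf' hf'' hint hM
end

section
/- Let f : [a,b] → ℝ be such that f' is absolutely continuous and f'' ∈ L^∞([a,b]). Then the right-hand side of the companion inequality at x = (3a+b)/4, namely (1/64)(b-a)²‖f''‖_∞, is smaller than the right-hand side at x = (a+b)/2, namely (1/48)(b-a)²‖f''‖_∞; i.e., for all x ∈ [a,(a+b)/2], (1/3)[((a+3b)/4 - x)(x-a)² + ((a+b)/2 - x)³]/(b-a)³ · (b-a)² attains its minimum value (1/64)(b-a)² at x = (3a+b)/4. -/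
/-! Writing `h = b - a`, the cubic in the bound factors around its critical point `(3a+b)/4`:
it equals `3h³/64 + 2(x - (3a+b)/4)²((3a+5b)/8 - x)`, and the second term is nonnegative
on `[a, (a+b)/2]` because that interval lies left of `(3a+5b)/8`. -/

open Set

/-- The bracket in the bound: `G x = boundCubic a b x / (3 (b - a))`. -/
noncomputable def boundCubic (a b x : ℝ) : ℝ :=
  ((a + 3*b)/4 - x) * (x - a)^2 + ((a + b)/2 - x)^3

theorem boundCubic_eq (a b x : ℝ) :
    boundCubic a b x = 3 * (b - a)^3 / 64 + 2 * (x - (3*a + b)/4)^2 * ((3*a + 5*b)/8 - x) := by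
  unfold boundCubic
  ring

theorem boundCubic_three_quarters (a b : ℝ) :
    boundCubic a b ((3*a + b)/4) = 3 * (b - a)^3 / 64 := by
  rw [boundCubic_eq]
  ring

theorem boundCubic_ge {a b x : ℝ} (hx : x ≤ (3*a + 5*b)/8) :
    3 * (b - a)^3 / 64 ≤ boundCubic a b x := by
  rw [boundCubic_eq]
  have : 0 ≤ 2 * (x - (3*a + b)/4)^2 * ((3*a + 5*b)/8 - x) := by
    have : 0 ≤ (3*a + 5*b)/8 - x := by linarith
    positivity
  linarith

theorem one_third_mul_div_pow_three_mul_sq {c : ℝ} (hc : c ≠ 0) (y : ℝ) :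
    1/3 * y / c^3 * c^2 = y / (3 * c) := by
  field_simp

theorem bound_min_at_three_quarters
    (a b : ℝ) (hab : a < b) :
    (1/3) * (((a + 3*b)/4 - (3*a + b)/4) * ((3*a + b)/4 - a)^2
        + ((a + b)/2 - (3*a + b)/4)^3) / (b - a)^3 * (b - a)^2
      = (1/64) * (b - a)^2 ∧
    ∀ x ∈ Icc a ((a + b)/2),
      (1/64) * (b - a)^2
        ≤ (1/3) * (((a + 3*b)/4 - x) * (x - a)^2 + ((a + b)/2 - x)^3)
            / (b - a)^3 * (b - a)^2 := by
  have hba : 0 < b - a := sub_pos.mpr hab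
  refine ⟨?_, fun x hx => ?_⟩
  · change 1/3 * boundCubic a b ((3*a + b)/4) / (b - a)^3 * (b - a)^2 = _
    rw [one_third_mul_div_pow_three_mul_sq hba.ne', boundCubic_three_quarters]
    field_simp
  · change _ ≤ 1/3 * boundCubic a b x / (b - a)^3 * (b - a)^2
    rw [one_third_mul_div_pow_three_mul_sq hba.ne', le_div_iff₀ (by positivity)]
    linear_combination boundCubic_ge (a := a) (b := b) (by linarith [hx.2] : x ≤ (3*a + 5*b)/8)
end
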